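/- arXiv:2009.08113 — 7 statements merged into one kernel-verified Lean document; each statement's English description precedes it below -/
import Mathlib

section
/- Let n ≥ 1 and consider the uniform probability measure on the set Ω_n of all (2n)! orderings ω = (ω_1, …, ω_{2n}) of the 2n socks {1,…,n} × {0,1}. If (k_1, …, k_n) is a tuple of positive integers satisfying k_{i+1} ≥ k_i − 1 for all 1 ≤ i < n and k_n = 1, then the probability that K_j(x(ω)) = k_j for all j = 1, …, n equals 2^n · n! · (∏_{i=1}^n k_i) / (2n)!. -/
/-!
Step `m` of `x(ω)` goes down exactly when the type drawn at step `m` is a repeat, so `L_{j+1}` is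
the `j`-th element (counting from `0`) of the `n`-element set `R(ω)` of repeat positions, and
`K_{j+1} = L_{j+1} - 2 j`. The event is therefore `R(ω) = {k (j+1) + 2 j | j < n}`. Orderings with
a prescribed repeat set are counted one draw at a time: once `u` types have been seen, `s` of them
twice, a new type can be drawn in `2 (n - u)` ways and a repeat in `u - s` ways. The `n` new-type
steps contribute `2^n n!`, and at the `(j+1)`-st repeat `u - s` is the height `k (j+1)`.
-/

/-- The path associated with an ordering `ω` of the `2n` socks `{1,…,n} × {0,1}`:
`x 0 = 0`, and the path steps up when a new sock type is drawn and down when the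
drawn type has already occurred. -/
def sockPath (n : ℕ) (ω : Fin (2 * n) → Fin n × Bool) : ℕ → ℤ
  | 0 => 0
  | m + 1 =>
    sockPath n ω m +
      if h : m < 2 * n then
        if ∃ i : Fin (2 * n), (i : ℕ) < m ∧ (ω i).1 = (ω ⟨m, h⟩).1 then -1 else 1
      else 0

/-- `Lseq x j` is `L_j(x)`: `L_0(x) = 0` and
`L_j(x) = min { i > L_{j-1}(x) : x (i+1) = x i - 1 }`. -/
noncomputable def Lseq (x : ℕ → ℤ) : ℕ → ℕ
  | 0 => 0
  | j + 1 => sInf {i : ℕ | Lseq x j < i ∧ x (i + 1) = x i - 1}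

/-- `Kseq x j` is `K_j(x) = x (L_j(x))`. -/
noncomputable def Kseq (x : ℕ → ℤ) (j : ℕ) : ℤ := x (Lseq x j)

/-- A Dyck path of length `2n`: a tuple `(x 1, …, x (2n))` of integers with `x 1 = 1`,
`|x (i+1) - x i| = 1` for `1 ≤ i < 2n`, `x i ≥ 0` for `1 ≤ i ≤ 2n - 1`, and `x (2n) = 0`. -/
def IsDyckPath (n : ℕ) (x : ℕ → ℤ) : Prop :=
  x 1 = 1 ∧ (∀ i, 1 ≤ i → i < 2 * n → |x (i + 1) - x i| = 1) ∧
    (∀ i, 1 ≤ i → i ≤ 2 * n - 1 → 0 ≤ x i) ∧ x (2 * n) = 0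


open Finset Function

lemma Set.Finite.toFinset_ofPred_mem {α : Type*} {s : Finset α}
    (hf : (Set.ofPred (· ∈ s)).Finite) : hf.toFinset = s := by
  ext; simp

namespace Nat

variable {s : Finset ℕ} {j n : ℕ}

lemma count_add_count_not (p : ℕ → Prop) [DecidablePred p] (m : ℕ) :
    count p m + count (fun k => ¬p k) m = m := by
  rw [count_eq_card_filter_range, count_eq_card_filter_range,
    card_filter_add_card_filter_not, card_range]

lemma nth_mem_finset (hj : j < #s) : nth (· ∈ s) j ∈ s :=
  nth_mem_of_lt_card s.finite_toSet (by simpa using hj)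

lemma count_nth_finset (hj : j < #s) : count (· ∈ s) (nth (· ∈ s) j) = j :=
  count_nth fun _ => by simpa using hj

lemma count_nth_finset_succ (hj : j < #s) : count (· ∈ s) (nth (· ∈ s) j + 1) = j + 1 :=
  count_nth_succ fun _ => by simpa using hj

lemma image_nth_range_card (s : Finset ℕ) : (range #s).image (nth (· ∈ s)) = s := by
  apply coe_injective
  simpa [Set.Iio] using image_nth_Iio_card (p := (· ∈ s)) s.finite_toSet

lemma nth_image_range_of_strictMonoOn {d : ℕ → ℕ} (hd : StrictMonoOn d (Set.Iio n))
    (hj : j < n) : nth (· ∈ (range n).image d) j = d j := by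
  have hcard : #((range n).image d) = n := by
    rw [Finset.card_image_of_injOn (by simpa using hd.injOn), card_range]
  have hdom : {i | ∀ hf : (Set.ofPred (· ∈ (range n).image d)).Finite, i < #hf.toFinset}
      = Set.Iio n := by
    ext i
    simp only [Set.Finite.toFinset_ofPred_mem, hcard]
    exact ⟨fun h => h (finite_toSet ((range n).image d)), fun h _ => h⟩
  refine (eq_nth_of_strictMonoOn_of_mapsTo_of_surjOn d ?_ ?_ ?_ (by rw [hdom]; exact hj)).symm
  all_goals rw [hdom]
  · intro x hx
    obtain ⟨i, hi, rfl⟩ := Finset.mem_image.1 (id hx : x ∈ (range n).image d)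
    exact ⟨i, mem_range.1 hi, rfl⟩
  · exact fun i hi => mem_image_of_mem d (mem_range.2 hi)
  · exact hd

lemma forall_nth_eq_iff_eq_image {d : ℕ → ℕ} (hd : StrictMonoOn d (Set.Iio n)) (hs : #s = n) :
    (∀ j < n, nth (· ∈ s) j = d j) ↔ s = (range n).image d := by
  constructor
  · intro h
    rw [← image_nth_range_card s, hs]
    exact image_congr fun j hj => h j (by simpa using hj)
  · rintro rfl j hj
    exact nth_image_range_of_strictMonoOn hd hj

end Nat

lemma card_filter_snoc {γ : Type*} [Fintype γ] {m : ℕ} (P : (Fin (m + 1) → γ) → Prop)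
    [DecidablePred P] : #{g | P g} = ∑ f : Fin m → γ, #{c | P (Fin.snoc f c)} := by
  rw [card_filter, ← (Fin.snocEquiv fun _ => γ).sum_comp, Fintype.sum_prod_type_right]
  exact Fintype.sum_congr _ _ fun f => (card_filter _ _).symm

lemma card_filter_equiv_eq_card_filter_injective {α β : Type*} [Fintype α] [Fintype β]
    [DecidableEq α] [DecidableEq β] (h : Fintype.card α = Fintype.card β)
    (P : (α → β) → Prop) [DecidablePred P] :
    #{e : α ≃ β | P e} = #{f : α → β | Injective f ∧ P f} := by
  refine card_bij (fun e _ => ⇑e) (fun e he => ?_) (fun _ _ _ _ h => DFunLike.coe_injective h) ?_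
  · simp only [mem_filter, mem_univ, true_and] at he ⊢
    exact ⟨e.injective, he⟩
  · intro f hf
    simp only [mem_filter, mem_univ, true_and] at hf
    exact ⟨Equiv.ofBijective f ((Fintype.bijective_iff_injective_and_card f).2 ⟨hf.1, h⟩),
      by simpa using hf.2, rfl⟩

lemma prod_filter_two_mul_sub_count_mul_factorial (q : ℕ → Prop) [DecidablePred q] {n : ℕ} :
    ∀ {m : ℕ}, Nat.count q m ≤ n →
      (∏ p ∈ (range m).filter q, 2 * (n - Nat.count q p)) * (n - Nat.count q m).factorial =
        2 ^ Nat.count q m * n.factorial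
  | 0, _ => by simp
  | m + 1, h => by
    rw [Nat.count_succ] at h ⊢
    rw [range_add_one, filter_insert]
    split_ifs with hq
    · have hc : Nat.count q m < n := by simpa [hq] using h
      have ih := prod_filter_two_mul_sub_count_mul_factorial q hc.le
      rw [← Nat.mul_factorial_pred (Nat.sub_ne_zero_of_lt hc)] at ih
      rw [prod_insert (by simp), Nat.sub_add_eq, pow_succ, mul_right_comm _ 2, ← ih]
      ring
    · simpa [hq] using prod_filter_two_mul_sub_count_mul_factorial q (by simpa [hq] using h)

section Repeats

variable {β : Type*} {m : ℕ}

def IsRepeat (g : Fin m → β) (p : ℕ) : Prop :=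
  ∃ h : p < m, ∃ i : Fin m, (i : ℕ) < p ∧ g i = g ⟨p, h⟩

lemma not_isRepeat_zero (g : Fin m → β) : ¬IsRepeat g 0 :=
  fun ⟨_, _, hi, _⟩ => Nat.not_lt_zero _ hi

variable [DecidableEq β]

instance (g : Fin m → β) : DecidablePred (IsRepeat g) :=
  fun _ => inferInstanceAs (Decidable (∃ _, _))

def repeatSet (g : Fin m → β) : Finset ℕ := (range m).filter (IsRepeat g)

lemma mem_repeatSet {g : Fin m → β} {p : ℕ} : p ∈ repeatSet g ↔ IsRepeat g p :=
  mem_filter.trans (and_iff_right_of_imp fun h => mem_range.2 h.1)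

lemma repeatSet_eq_iff {g : Fin m → β} {S : Finset ℕ} (hS : S ⊆ range m) :
    repeatSet g = S ↔ ∀ p < m, (IsRepeat g p ↔ p ∈ S) := by
  refine ⟨fun h p _ => by rw [← mem_repeatSet, h], fun h => ext fun p => ?_⟩
  refine ⟨fun hp => ?_, fun hp => mem_repeatSet.2 ((h p (mem_range.1 (hS hp))).2 hp)⟩
  have hp := mem_repeatSet.1 hp
  exact (h p hp.1).1 hp

lemma isRepeat_snoc {g : Fin m → β} {c : β} {p : ℕ} :
    IsRepeat (Fin.snoc g c : Fin (m + 1) → β) p ↔ IsRepeat g p ∨ (p = m ∧ c ∈ univ.image g) := by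
  simp only [mem_image, mem_univ, true_and]
  constructor
  · rintro ⟨hp, i, hip, hi⟩
    have him : (i : ℕ) < m := by omega
    rcases (Nat.lt_succ_iff.1 hp).lt_or_eq with hpm | rfl
    · exact Or.inl ⟨hpm, i.castLT him, hip, by simpa [Fin.snoc, him, hpm] using hi⟩
    · exact Or.inr ⟨rfl, i.castLT him, by simpa [Fin.snoc, him] using hi⟩
  · rintro (⟨hp, i, hip, hi⟩ | ⟨rfl, i, rfl⟩)
    · exact ⟨by omega, i.castSucc, hip, by simpa [Fin.snoc, hp] using hi⟩
    · exact ⟨by omega, i.castSucc, i.isLt, by simp [Fin.snoc]⟩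

lemma isRepeat_snoc_of_lt {g : Fin m → β} {c : β} {p : ℕ} (hp : p < m) :
    IsRepeat (Fin.snoc g c : Fin (m + 1) → β) p ↔ IsRepeat g p :=
  isRepeat_snoc.trans (or_iff_left fun h => hp.ne h.1)

lemma repeatSet_snoc (g : Fin m → β) (c : β) :
    repeatSet (Fin.snoc g c : Fin (m + 1) → β) =
      if c ∈ univ.image g then insert m (repeatSet g) else repeatSet g := by
  ext p
  split_ifs with hc <;> simp [mem_repeatSet, isRepeat_snoc, hc, or_comm]

lemma image_snoc (g : Fin m → β) (c : β) :
    univ.image (Fin.snoc g c : Fin (m + 1) → β) = insert c (univ.image g) :=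
  coe_injective (by simp)

lemma card_repeatSet_add_card_image (g : Fin m → β) : #(repeatSet g) + #(univ.image g) = m := by
  induction g using Fin.snocInduction with
  | elim0 => simp [repeatSet]
  | @snoc m g c ih =>
    have hm : m ∉ repeatSet g := fun h => lt_irrefl m (mem_repeatSet.1 h).1
    rw [repeatSet_snoc, image_snoc]
    split_ifs with hc
    · rw [card_insert_of_notMem hm, insert_eq_of_mem hc]
      omega
    · rw [card_insert_of_notMem hc]
      omega

end Repeats

section Draws

variable {α : Type*} [Fintype α] [DecidableEq α] {m : ℕ}

lemma card_filter_notMem_image_and_fst_mem_iff {f : Fin m → α × Bool} (hf : Injective f)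
    (P : Prop) [Decidable P] :
    #{c | c ∉ univ.image f ∧ (c.1 ∈ univ.image (Prod.fst ∘ f) ↔ P)} =
      if P then 2 * #(univ.image (Prod.fst ∘ f)) - m
      else 2 * (Fintype.card α - #(univ.image (Prod.fst ∘ f))) := by
  set T := univ.image (Prod.fst ∘ f)
  have hfT (i : Fin m) : (f i).1 ∈ T := mem_image_of_mem _ (mem_univ i)
  split_ifs with hP
  · have : ({c | c ∉ univ.image f ∧ (c.1 ∈ T ↔ P)} : Finset _) = T ×ˢ univ \ univ.image f := by
      ext c; simp [hP, and_comm]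
    rw [this, card_sdiff_of_subset, card_product, card_image_of_injective _ hf]
    · simp [mul_comm]
    · intro c hc
      obtain ⟨i, -, rfl⟩ := mem_image.1 hc
      exact mem_product.2 ⟨hfT i, mem_univ _⟩
  · have : ({c | c ∉ univ.image f ∧ (c.1 ∈ T ↔ P)} : Finset _) = Tᶜ ×ˢ univ := by
      ext c
      simp only [mem_filter, mem_univ, true_and, mem_product, mem_compl, and_true, hP, iff_false]
      refine and_iff_right_of_imp fun h hc => h ?_
      obtain ⟨i, -, rfl⟩ := mem_image.1 hc
      exact hfT i
    rw [this, card_product, card_compl]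
    simp [mul_comm]

variable (α) in
def drawsWithRepeats (S : Finset ℕ) (m : ℕ) : Finset (Fin m → α × Bool) :=
  {f | Injective f ∧ ∀ p < m, (IsRepeat (Prod.fst ∘ f) p ↔ p ∈ S)}

lemma snoc_mem_drawsWithRepeats {S : Finset ℕ} {f : Fin m → α × Bool} {c : α × Bool} :
    Fin.snoc f c ∈ drawsWithRepeats α S (m + 1) ↔
      f ∈ drawsWithRepeats α S m ∧ c ∉ univ.image f ∧
        (c.1 ∈ univ.image (Prod.fst ∘ f) ↔ m ∈ S) := by
  have hm : ¬IsRepeat (Prod.fst ∘ f) m := fun h => lt_irrefl m h.1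
  simp +contextual only [drawsWithRepeats, mem_filter, mem_univ, true_and,
    Fin.snoc_injective_iff, Fin.comp_snoc, Nat.forall_lt_succ_right, isRepeat_snoc_of_lt,
    isRepeat_snoc, hm, false_or, true_and, Set.mem_range, mem_image]
  tauto

/-- If `u` types were seen before step `p`, `s` of them twice, a repeat is the missing sock of one
of the `u - s` types seen once, and a new type is any of the `2 (n - u)` socks of unseen types. -/
def choiceCount (n : ℕ) (S : Finset ℕ) (p : ℕ) : ℕ :=
  if p ∈ S then Nat.count (· ∉ S) p - Nat.count (· ∈ S) p else 2 * (n - Nat.count (· ∉ S) p)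

lemma card_image_fst_of_mem_drawsWithRepeats {S : Finset ℕ} {f : Fin m → α × Bool}
    (hf : f ∈ drawsWithRepeats α S m) : #(univ.image (Prod.fst ∘ f)) = Nat.count (· ∉ S) m := by
  have hrep : repeatSet (Prod.fst ∘ f) = (range m).filter (· ∈ S) :=
    filter_congr fun p hp => (mem_filter.1 hf).2.2 p (mem_range.1 hp)
  have hsum := card_repeatSet_add_card_image (Prod.fst ∘ f)
  rw [hrep, ← Nat.count_eq_card_filter_range] at hsum
  exact Nat.add_left_cancel (hsum.trans (Nat.count_add_count_not (· ∈ S) m).symm)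

theorem card_drawsWithRepeats (S : Finset ℕ) (m : ℕ) :
    #(drawsWithRepeats α S m) = ∏ p ∈ range m, choiceCount (Fintype.card α) S p := by
  induction m with
  | zero => simp [drawsWithRepeats, injective_of_subsingleton]
  | succ m ih =>
    calc #(drawsWithRepeats α S (m + 1))
        = ∑ f : Fin m → α × Bool, #{c | Fin.snoc f c ∈ drawsWithRepeats α S (m + 1)} := by
          have h := card_filter_snoc (· ∈ drawsWithRepeats α S (m + 1))
          rwa [filter_mem_eq_inter, univ_inter] at h
      _ = ∑ f : Fin m → α × Bool,
            if f ∈ drawsWithRepeats α S m then choiceCount (Fintype.card α) S m else 0 := by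
          refine sum_congr rfl fun f _ => ?_
          simp_rw [snoc_mem_drawsWithRepeats]
          split_ifs with hf
          · simp only [hf, true_and]
            rw [card_filter_notMem_image_and_fst_mem_iff (mem_filter.1 hf).2.1,
              card_image_fst_of_mem_drawsWithRepeats hf, choiceCount]
            have := Nat.count_add_count_not (· ∈ S) m
            split_ifs <;> omega
          · simp [hf]
      _ = ∏ p ∈ range (m + 1), choiceCount (Fintype.card α) S p := by
          rw [sum_ite_mem, univ_inter, sum_const, smul_eq_mul, ih, prod_range_succ]

end Draws

theorem card_equiv_repeatSet_eq {n : ℕ} {S : Finset ℕ} (hS : S ⊆ range (2 * n)) :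
    #{ω : Fin (2 * n) ≃ Fin n × Bool | repeatSet (Prod.fst ∘ ω) = S} =
      ∏ p ∈ range (2 * n), choiceCount n S p := by
  rw [card_filter_equiv_eq_card_filter_injective (by simp [mul_comm])
      (fun f => repeatSet (Prod.fst ∘ f) = S),
    ← Fintype.card_fin n, ← card_drawsWithRepeats, Fintype.card_fin]
  simp only [drawsWithRepeats, repeatSet_eq_iff hS]

section SockPath

variable {n : ℕ} (ω : Fin (2 * n) → Fin n × Bool)

lemma sockPath_succ_of_lt {m : ℕ} (h : m < 2 * n) :
    sockPath n ω (m + 1) = sockPath n ω m + if IsRepeat (Prod.fst ∘ ω) m then -1 else 1 := by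
  rw [sockPath, dif_pos h]
  exact congrArg _ (if_congr ⟨fun hr => ⟨h, hr⟩, fun ⟨_, hr⟩ => hr⟩ rfl rfl)

lemma sockPath_succ_of_le {m : ℕ} (h : 2 * n ≤ m) : sockPath n ω (m + 1) = sockPath n ω m := by
  rw [sockPath, dif_neg (by omega), add_zero]

lemma sockPath_succ_eq_sub_one_iff (m : ℕ) :
    sockPath n ω (m + 1) = sockPath n ω m - 1 ↔ m ∈ repeatSet (Prod.fst ∘ ω) := by
  rw [mem_repeatSet]
  rcases lt_or_ge m (2 * n) with h | h
  · rw [sockPath_succ_of_lt ω h]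
    split_ifs with hr <;> simp only [hr, iff_true, iff_false] <;> omega
  · rw [sockPath_succ_of_le ω h]
    exact ⟨fun h' => by omega, fun hr => absurd hr.1 (by omega)⟩

lemma sockPath_eq {m : ℕ} (h : m ≤ 2 * n) :
    sockPath n ω m = m - 2 * Nat.count (· ∈ repeatSet (Prod.fst ∘ ω)) m := by
  induction m with
  | zero => simp [sockPath]
  | succ m ih =>
    rw [sockPath_succ_of_lt ω (by omega), ih (by omega), Nat.count_succ]
    simp only [mem_repeatSet]
    split_ifs <;> push_cast <;> ring

end SockPath

lemma Lseq_succ_eq_nth {x : ℕ → ℤ} {s : Finset ℕ} (hs : ∀ i, x (i + 1) = x i - 1 ↔ i ∈ s)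
    (h0 : 0 ∉ s) : ∀ {j}, j < #s → Lseq x (j + 1) = Nat.nth (· ∈ s) j
  | 0, _ => by
    rw [Lseq, Lseq, Nat.nth_zero]
    congr 1
    ext i
    simp only [hs, Set.mem_ofPred_eq]
    exact and_iff_right_of_imp fun hi => Nat.pos_of_ne_zero (ne_of_mem_of_not_mem hi h0)
  | j + 1, hj => by
    rw [Lseq, Lseq_succ_eq_nth hs h0 (by omega), ← Nat.count_nth_finset_succ (by omega : j < #s),
      Nat.nth_count_eq_sInf]
    congr 1
    ext i
    simp only [hs, Set.mem_ofPred_eq, Nat.succ_le_iff]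
    exact and_comm

section BijectiveDraws

variable {n : ℕ} (ω : Fin (2 * n) ≃ Fin n × Bool)

lemma card_repeatSet_equiv : #(repeatSet (Prod.fst ∘ ω)) = n := by
  have h := card_repeatSet_add_card_image (Prod.fst ∘ ω)
  rw [image_univ_of_surjective (Prod.fst_surjective.comp ω.surjective), card_univ,
    Fintype.card_fin] at h
  omega

lemma Kseq_sockPath_succ {j : ℕ} (hj : j < n) :
    Kseq (sockPath n ω) (j + 1) = Nat.nth (· ∈ repeatSet (Prod.fst ∘ ω)) j - 2 * j := by
  have hj' : j < #(repeatSet (Prod.fst ∘ ω)) := by rwa [card_repeatSet_equiv]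
  have h0 : 0 ∉ repeatSet (Prod.fst ∘ ω) := fun h => not_isRepeat_zero _ (mem_repeatSet.1 h)
  have hlt : Nat.nth (· ∈ repeatSet (Prod.fst ∘ ω)) j ≤ 2 * n :=
    (mem_repeatSet.1 (Nat.nth_mem_finset hj')).1.le
  rw [Kseq, Lseq_succ_eq_nth (sockPath_succ_eq_sub_one_iff ω) h0 hj', sockPath_eq ω hlt,
    Nat.count_nth_finset hj']

end BijectiveDraws

/-- Where `L_{j+1}` must sit for `K_{j+1} = k (j + 1)`: the height before the `(j+1)`-st down step
is its position minus twice the `j` earlier down steps. -/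
def downStep (k : ℕ → ℕ) (j : ℕ) : ℕ := k (j + 1) + 2 * j

lemma strictMonoOn_downStep {n : ℕ} {k : ℕ → ℕ}
    (hk : ∀ i, 1 ≤ i → i < n → k i ≤ k (i + 1) + 1) : StrictMonoOn (downStep k) (Set.Iio n) :=
  strictMonoOn_of_lt_succ Set.ordConnected_Iio fun j _ _ hj => by
    have := hk (j + 1) (by omega) (by simpa using hj)
    simp only [downStep, Order.succ_eq_add_one]
    omega

lemma image_downStep_subset_range {n : ℕ} {k : ℕ → ℕ}
    (hk : StrictMonoOn (downStep k) (Set.Iio n)) (hlast : k n = 1) :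
    (range n).image (downStep k) ⊆ range (2 * n) := by
  intro p hp
  obtain ⟨j, hj, rfl⟩ := mem_image.1 hp
  have hj := mem_range.1 hj
  have := hk.monotoneOn hj (show n - 1 < n by omega) (by omega)
  have hn : downStep k (n - 1) = 2 * n - 1 := by
    simp only [downStep, Nat.sub_add_cancel (by omega : 1 ≤ n), hlast]
    omega
  exact mem_range.2 (by omega)

lemma Kseq_sockPath_eq_iff {n : ℕ} {k : ℕ → ℕ} (ω : Fin (2 * n) ≃ Fin n × Bool)
    (hk : StrictMonoOn (downStep k) (Set.Iio n)) :
    (∀ j, 1 ≤ j → j ≤ n → Kseq (sockPath n ⇑ω) j = (k j : ℤ)) ↔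
      repeatSet (Prod.fst ∘ ω) = (range n).image (downStep k) := by
  rw [← Nat.forall_nth_eq_iff_eq_image hk (card_repeatSet_equiv ω)]
  refine ⟨fun h j hj => ?_, fun h j h1 h2 => ?_⟩
  · have := h (j + 1) (by omega) hj
    rw [Kseq_sockPath_succ ω hj] at this
    simp only [downStep]
    omega
  · obtain ⟨j, rfl⟩ := Nat.exists_eq_add_of_le' h1
    rw [Kseq_sockPath_succ ω (by omega), h j (by omega), downStep]
    push_cast
    ring

theorem prod_choiceCount_image_downStep {n : ℕ} {k : ℕ → ℕ}
    (hk : StrictMonoOn (downStep k) (Set.Iio n))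
    (hS : (range n).image (downStep k) ⊆ range (2 * n)) :
    ∏ p ∈ range (2 * n), choiceCount n ((range n).image (downStep k)) p =
      2 ^ n * n.factorial * ∏ j ∈ range n, k (j + 1) := by
  set S := (range n).image (downStep k)
  have hcard : #S = n := by
    rw [card_image_of_injOn (by simpa using hk.injOn), card_range]
  have hfilter : (range (2 * n)).filter (· ∈ S) = S := by
    rw [filter_mem_eq_inter, inter_eq_right.2 hS]
  have hups : ∏ p ∈ (range (2 * n)).filter (· ∉ S), 2 * (n - Nat.count (· ∉ S) p) =
      2 ^ n * n.factorial := by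
    have hsum := Nat.count_add_count_not (· ∈ S) (2 * n)
    rw [Nat.count_eq_card_filter_range, hfilter, hcard] at hsum
    have hup : Nat.count (· ∉ S) (2 * n) = n := by omega
    simpa [hup] using prod_filter_two_mul_sub_count_mul_factorial (· ∉ S) hup.le
  have hdowns : ∏ p ∈ S, (Nat.count (· ∉ S) p - Nat.count (· ∈ S) p) =
      ∏ j ∈ range n, k (j + 1) := by
    rw [prod_image (by simpa using hk.injOn)]
    refine prod_congr rfl fun j hj => ?_
    have hj := mem_range.1 hj
    have hdown : Nat.count (· ∈ S) (downStep k j) = j := by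
      rw [← Nat.nth_image_range_of_strictMonoOn hk hj]
      exact Nat.count_nth_finset (by rwa [hcard])
    have hsum := Nat.count_add_count_not (· ∈ S) (downStep k j)
    simp only [downStep] at hdown hsum ⊢
    omega
  simp only [choiceCount]
  rw [prod_ite, hfilter, hdowns, hups, mul_comm]

open Classical in
theorem stmt_0_general (n : ℕ) (k : ℕ → ℕ)
    (hcond : ∀ i, 1 ≤ i → i < n → k i ≤ k (i + 1) + 1)
    (hlast : k n = 1) :
    ((Finset.univ.filter fun ω : Fin (2 * n) ≃ Fin n × Bool =>
          ∀ j, 1 ≤ j → j ≤ n → Kseq (sockPath n ⇑ω) j = (k j : ℤ)).card : ℚ) /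
        (Nat.factorial (2 * n) : ℚ) =
      (2 ^ n * (Nat.factorial n : ℚ) * ∏ i ∈ Finset.Icc 1 n, (k i : ℚ)) /
        (Nat.factorial (2 * n) : ℚ) := by
  have hk := strictMonoOn_downStep hcond
  have hS := image_downStep_subset_range hk hlast
  simp only [Kseq_sockPath_eq_iff _ hk]
  rw [card_equiv_repeatSet_eq hS, prod_choiceCount_image_downStep hk hS,
    ← Ico_add_one_right_eq_Icc, prod_Ico_eq_prod_range, Nat.add_sub_cancel]
  push_cast
  simp only [add_comm]

open Classical in
/-- Under the uniform measure on the `(2n)!` orderings of the `2n` socks, if the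
positive integer tuple `(k 1, …, k n)` satisfies `k (i+1) ≥ k i - 1` for `1 ≤ i < n`
and `k n = 1`, then the probability that `K_j(x(ω)) = k j` for all `j = 1, …, n` is
`2^n · n! · (∏ k i) / (2n)!`. -/
theorem stmt_0 (n : ℕ) (hn : 1 ≤ n) (k : ℕ → ℕ)
    (hpos : ∀ i, 1 ≤ i → i ≤ n → 0 < k i)
    (hcond : ∀ i, 1 ≤ i → i < n → k i ≤ k (i + 1) + 1)
    (hlast : k n = 1) :
    ((Finset.univ.filter fun ω : Fin (2 * n) ≃ Fin n × Bool =>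
          ∀ j, 1 ≤ j → j ≤ n → Kseq (sockPath n ⇑ω) j = (k j : ℤ)).card : ℚ) /
        (Nat.factorial (2 * n) : ℚ) =
      (2 ^ n * (Nat.factorial n : ℚ) * ∏ i ∈ Finset.Icc 1 n, (k i : ℚ)) /
        (Nat.factorial (2 * n) : ℚ) :=
  stmt_0_general n k hcond hlast
end

section
/- Let n ≥ 1 and let x = (x_1, …, x_{2n}) be a Dyck path of length 2n. If k_j = K_j(x) for j = 1, …, n, then (k_1, …, k_n) satisfies: k_{i+1} ≥ k_i − 1 for all 1 ≤ i < n, and k_n = 1. (Lemma 1) -/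
/-- Lemma 1: if `x` is a Dyck path of length `2n` and `k j = K_j(x)` for `j = 1, …, n`,
then `k (i+1) ≥ k i - 1` for all `1 ≤ i < n` and `k n = 1`. -/
theorem stmt_3 (n : ℕ) (hn : 1 ≤ n) (x : ℕ → ℤ) (hx : IsDyckPath n x)
    (k : ℕ → ℤ) (hk : ∀ j, 1 ≤ j → j ≤ n → k j = Kseq x j) :
    (∀ i, 1 ≤ i → i < n → k i - 1 ≤ k (i + 1)) ∧ k n = 1 := by
  obtain ⟨h1, hstep, hnn, h2n⟩ := hx
  have h2n1 : 2 * n - 1 + 1 = 2 * n := by omega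
  set D : Finset ℕ := (Finset.Icc 1 (2*n-1)).filter (fun i => x (i+1) = x i - 1) with hD
  -- x (2n-1) = 1
  have hlast : x (2*n-1) = 1 := by
    have hs := hstep (2*n-1) (by omega) (by omega)
    rw [h2n1, h2n] at hs
    have hnz := hnn (2*n-1) (by omega) le_rfl
    rcases (abs_eq (by norm_num : (0:ℤ) ≤ 1)).mp hs with h | h <;> omega
  have hlastD : 2*n-1 ∈ D := by
    simp only [hD, Finset.mem_filter, Finset.mem_Icc]
    refine ⟨⟨by omega, le_rfl⟩, ?_⟩
    rw [h2n1, h2n, hlast]; ring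
  -- D has cardinality n
  have hcardD : D.card = n := by
    have htel : ∑ i ∈ Finset.range (2*n-1), (x (i+1+1) - x (i+1)) = x (2*n) - x 1 := by
      have := Finset.sum_range_sub (fun i => x (i+1)) (2*n-1)
      rw [this, h2n1]
    have hterm : ∀ i ∈ Finset.range (2*n-1),
        x (i+1+1) - x (i+1) = if x (i+1+1) = x (i+1) - 1 then (-1:ℤ) else 1 := by
      intro i hi
      have hi' := Finset.mem_range.mp hi
      have hs := hstep (i+1) (by omega) (by omega)
      split_ifs with h
      · omega
      · rcases (abs_eq (by norm_num : (0:ℤ) ≤ 1)).mp hs with h' | h' <;> omega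
    rw [Finset.sum_congr rfl hterm, Finset.sum_ite, Finset.sum_const, Finset.sum_const] at htel
    have hsplit := Finset.card_filter_add_card_filter_not
      (s := Finset.range (2*n-1)) (p := fun i => x (i+1+1) = x (i+1) - 1)
    rw [Finset.card_range] at hsplit
    have himg : D = ((Finset.range (2*n-1)).filter (fun i => x (i+1+1) = x (i+1) - 1)).image
        (fun i => i + 1) := by
      ext a
      simp only [hD, Finset.mem_filter, Finset.mem_Icc, Finset.mem_image, Finset.mem_range]
      constructor
      · rintro ⟨⟨ha1, ha2⟩, hdown⟩
        exact ⟨a - 1, ⟨by omega, by rw [show a - 1 + 1 = a by omega]; exact hdown⟩, by omega⟩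
      · rintro ⟨b, ⟨hb, hdown⟩, rfl⟩
        exact ⟨⟨by omega, by omega⟩, hdown⟩
    have hcardeq : D.card =
        ((Finset.range (2*n-1)).filter (fun i => x (i+1+1) = x (i+1) - 1)).card := by
      rw [himg, Finset.card_image_of_injective _ (fun a b h => by omega)]
    rw [h2n, h1] at htel
    simp only [nsmul_eq_mul] at htel
    rw [hcardeq]
    omega
  -- main induction: Lseq enumerates D
  have key : ∀ j, j ≤ n → (D.filter (fun i => i ≤ Lseq x j)).card = j ∧
      (∀ jm, j = jm + 1 → Lseq x jm < Lseq x j ∧ Lseq x j ∈ D) := by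
    intro j
    induction j with
    | zero =>
      intro _
      refine ⟨?_, by omega⟩
      have hL0 : Lseq x 0 = 0 := rfl
      have : D.filter (fun i => i ≤ Lseq x 0) = ∅ := by
        apply Finset.filter_eq_empty_iff.mpr
        intro i hi
        simp only [hD, Finset.mem_filter, Finset.mem_Icc] at hi
        omega
      rw [this]; rfl
    | succ j ih =>
      intro hj
      obtain ⟨hcard, _⟩ := ih (by omega)
      have hne : ∃ m ∈ D, Lseq x j < m := by
        by_contra h
        push_neg at h
        have heq : D.filter (fun i => i ≤ Lseq x j) = D :=
          Finset.filter_eq_self.mpr h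
        rw [heq, hcardD] at hcard
        omega
      obtain ⟨m, hmD, hmgt⟩ := hne
      have hmdown : x (m+1) = x m - 1 := (Finset.mem_filter.mp hmD).2
      have hmle : m ≤ 2*n-1 := (Finset.mem_Icc.mp (Finset.mem_filter.mp hmD).1).2
      have hSdef : Lseq x (j+1) = sInf {i : ℕ | Lseq x j < i ∧ x (i + 1) = x i - 1} := rfl
      have hmS : m ∈ {i : ℕ | Lseq x j < i ∧ x (i + 1) = x i - 1} := ⟨hmgt, hmdown⟩
      have hLS : Lseq x (j+1) ∈ {i : ℕ | Lseq x j < i ∧ x (i + 1) = x i - 1} := by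
        rw [hSdef]; exact Nat.sInf_mem ⟨m, hmS⟩
      have hLle : Lseq x (j+1) ≤ m := by rw [hSdef]; exact Nat.sInf_le hmS
      have hLgt : Lseq x j < Lseq x (j+1) := hLS.1
      have hLD : Lseq x (j+1) ∈ D := by
        simp only [hD, Finset.mem_filter, Finset.mem_Icc]
        exact ⟨⟨by omega, by omega⟩, hLS.2⟩
      constructor
      · have heq : D.filter (fun i => i ≤ Lseq x (j+1)) =
            insert (Lseq x (j+1)) (D.filter (fun i => i ≤ Lseq x j)) := by
          ext a
          simp only [Finset.mem_filter, Finset.mem_insert]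
          constructor
          · rintro ⟨haD, hale⟩
            rcases eq_or_lt_of_le hale with h | h
            · exact Or.inl h
            · refine Or.inr ⟨haD, ?_⟩
              by_contra hgt
              push_neg at hgt
              have haS : a ∈ {i : ℕ | Lseq x j < i ∧ x (i + 1) = x i - 1} :=
                ⟨hgt, (Finset.mem_filter.mp haD).2⟩
              have := Nat.sInf_le haS
              rw [← hSdef] at this
              omega
          · rintro (h | ⟨haD, hale⟩)
            · subst h; exact ⟨hLD, le_rfl⟩
            · exact ⟨haD, by omega⟩
        rw [heq, Finset.card_insert_of_notMem, hcard]
        simp only [Finset.mem_filter]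
        push_neg
        intro _
        omega
      · rintro jm hjm
        have : jm = j := by omega
        subst this
        exact ⟨hLgt, hLD⟩
  -- k n = 1
  have hLn : Lseq x n = 2*n-1 := by
    obtain ⟨hc, hm⟩ := key n le_rfl
    obtain ⟨_, hnD⟩ := hm (n-1) (by omega)
    have hsub : D.filter (fun i => i ≤ Lseq x n) = D :=
      Finset.eq_of_subset_of_card_le (Finset.filter_subset _ _) (by rw [hc, hcardD])
    have h1' : 2*n-1 ≤ Lseq x n := by
      have := hlastD
      rw [← hsub] at this
      exact (Finset.mem_filter.mp this).2
    have h2' : Lseq x n ≤ 2*n-1 := (Finset.mem_Icc.mp (Finset.mem_filter.mp hnD).1).2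
    omega
  have hkn : k n = 1 := by
    rw [hk n hn le_rfl]
    unfold Kseq
    rw [hLn, hlast]
  refine ⟨?_, hkn⟩
  intro i h1i hin
  obtain ⟨_, hmemi⟩ := key i (by omega)
  obtain ⟨_, hiD⟩ := hmemi (i-1) (by omega)
  obtain ⟨_, hmemi1⟩ := key (i+1) (by omega)
  obtain ⟨hlt, hi1D⟩ := hmemi1 i rfl
  have hSdef : Lseq x (i+1) = sInf {m : ℕ | Lseq x i < m ∧ x (m + 1) = x m - 1} := rfl
  have hdowni : x (Lseq x i + 1) = x (Lseq x i) - 1 := (Finset.mem_filter.mp hiD).2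
  have hle1 : Lseq x (i+1) ≤ 2*n-1 := (Finset.mem_Icc.mp (Finset.mem_filter.mp hi1D).1).2
  have claim : ∀ t, Lseq x i + 1 + t ≤ Lseq x (i+1) →
      x (Lseq x i) - 1 ≤ x (Lseq x i + 1 + t) := by
    intro t
    induction t with
    | zero =>
      intro _
      rw [Nat.add_zero, hdowni]
    | succ t ih =>
      intro hle
      have hxm := ih (by omega)
      have hm1 : 1 ≤ Lseq x i + 1 + t := by omega
      have hm2 : Lseq x i + 1 + t < 2 * n := by omega
      have hsm := hstep (Lseq x i + 1 + t) hm1 hm2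
      have hnotdown : ¬ (x (Lseq x i + 1 + t + 1) = x (Lseq x i + 1 + t) - 1) := by
        intro hd
        have hmlt : Lseq x i + 1 + t < Lseq x (i+1) := by omega
        rw [hSdef] at hmlt
        exact Nat.notMem_of_lt_sInf hmlt ⟨by omega, hd⟩
      have hup : x (Lseq x i + 1 + t + 1) = x (Lseq x i + 1 + t) + 1 := by
        rcases (abs_eq (by norm_num : (0:ℤ) ≤ 1)).mp hsm with h' | h' <;> omega
      rw [show Lseq x i + 1 + (t+1) = Lseq x i + 1 + t + 1 by omega, hup]
      omega
  have hfin := claim (Lseq x (i+1) - Lseq x i - 1) (by omega)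
  rw [show Lseq x i + 1 + (Lseq x (i+1) - Lseq x i - 1) = Lseq x (i+1) by omega] at hfin
  rw [hk i h1i (by omega), hk (i+1) (by omega) (by omega)]
  unfold Kseq
  omega
end

section
/- Let n ≥ 1 and let (k_1, …, k_n) be a tuple of positive integers satisfying k_{i+1} ≥ k_i − 1 for all 1 ≤ i < n and k_n = 1. Define x = (x_1, …, x_{2n}) by x_i = i for i ≤ k_1, and x_{k_j + 2j − 1 + i} = k_j − 1 + i whenever 1 ≤ j ≤ n and i ≥ 0 with k_j − 1 + i ≤ k_{j+1} (setting k_{n+1} so that the last index is covered). Then x is a Dyck path of length 2n and K_j(x) = k_j for all j = 1, …, n. -/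
/-- Existence part of Lemma 2: if the positive integer tuple `(k 1, …, k n)` satisfies
condition (1), and `x` is given by `x i = i` for `i ≤ k 1` and
`x (k j + 2j - 1 + i) = k j - 1 + i` whenever `1 ≤ j ≤ n` and `k j - 1 + i ≤ k (j+1)`
(with `k (n+1) = 0` so that the last index `2n` is covered), then `x` is a Dyck path of
length `2n` with `K_j(x) = k j` for all `j = 1, …, n`. -/
theorem stmt_4 (n : ℕ) (hn : 1 ≤ n) (k : ℕ → ℕ)
    (hpos : ∀ i, 1 ≤ i → i ≤ n → 0 < k i)
    (hcond : ∀ i, 1 ≤ i → i < n → k i ≤ k (i + 1) + 1)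
    (hlast : k n = 1) (hend : k (n + 1) = 0)
    (x : ℕ → ℤ)
    (hx1 : ∀ i, 1 ≤ i → i ≤ k 1 → x i = (i : ℤ))
    (hx2 : ∀ j, 1 ≤ j → j ≤ n → ∀ i : ℕ, k j - 1 + i ≤ k (j + 1) →
        x (k j + 2 * j - 1 + i) = (k j : ℤ) - 1 + (i : ℤ)) :
    IsDyckPath n x ∧ ∀ j, 1 ≤ j → j ≤ n → Kseq x j = (k j : ℤ) := by
  have hk1 : 1 ≤ k 1 := hpos 1 le_rfl hn
  have hstep : ∀ a b : ℤ, (b = a + 1 ∨ b = a - 1) → |b - a| = 1 := by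
    rintro a b (rfl | rfl)
    · rw [show a + 1 - a = 1 from by ring]; norm_num
    · rw [show a - 1 - a = -1 from by ring]; norm_num
  -- condition k j - 1 ≤ k (j+1) for all 1 ≤ j ≤ n
  have hcnd : ∀ j, 1 ≤ j → j ≤ n → k j - 1 ≤ k (j + 1) := by
    intro j hj1 hjn
    rcases lt_or_eq_of_le hjn with h | h
    · have := hcond j hj1 h; omega
    · subst h; omega
  -- coverage lemma
  have cover : ∀ m, k 1 < m → m ≤ 2 * n →
      ∃ j t, 1 ≤ j ∧ j ≤ n ∧ k j - 1 + t ≤ k (j + 1) ∧ m = k j + 2 * j - 1 + t := by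
    intro m
    induction m with
    | zero => omega
    | succ m ih =>
      intro hm1 hm2
      by_cases hmk : k 1 < m
      · obtain ⟨j, t, hj1, hjn, ht, hmeq⟩ := ih hmk (by omega)
        by_cases h2 : k j - 1 + (t + 1) ≤ k (j + 1)
        · exact ⟨j, t + 1, hj1, hjn, h2, by omega⟩
        · have hkj : 1 ≤ k j := hpos j hj1 hjn
          have hjn' : j < n := by
            by_contra h
            have hjeq : j = n := by omega
            subst hjeq
            omega
          have hc := hcnd (j + 1) (by omega) hjn'
          exact ⟨j + 1, 0, by omega, hjn', by omega, by omega⟩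
      · have hc := hcnd 1 le_rfl hn
        exact ⟨1, 0, le_rfl, hn, by omega, by omega⟩
  -- down step value at start of segment j
  have downAt : ∀ j, 1 ≤ j → j ≤ n → x (k j + 2 * j - 1) = (k j : ℤ) - 1 := by
    intro j hj1 hjn
    have := hx2 j hj1 hjn 0 (by have := hcnd j hj1 hjn; omega)
    simpa using this
  -- value at end of segment j-1 (index k j + 2j - 2) is k j
  have valEnd : ∀ j, 1 ≤ j → j ≤ n → x (k j + 2 * j - 2) = (k j : ℤ) := by
    intro j hj1 hjn
    rcases eq_or_lt_of_le hj1 with h | h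
    · subst h
      have := hx1 (k 1) hk1 le_rfl
      rw [show k 1 + 2 * 1 - 2 = k 1 from by omega]
      exact this
    · set j' := j - 1 with hj'
      have hj'1 : 1 ≤ j' := by omega
      have hj'n : j' ≤ n := by omega
      have hkj' : 1 ≤ k j' := hpos j' hj'1 hj'n
      have hjj : j' + 1 = j := by omega
      have hle : k j' ≤ k j + 1 := by
        have := hcond j' hj'1 (by omega); rw [hjj] at this; exact this
      obtain ⟨t, htt⟩ : ∃ t, k j' + t = k j + 1 := ⟨k j + 1 - k j', by omega⟩
      have hct : k j' - 1 + t ≤ k (j' + 1) := by rw [hjj]; omega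
      have hv := hx2 j' hj'1 hj'n t hct
      rw [show k j' + 2 * j' - 1 + t = k j + 2 * j - 2 from by omega] at hv
      rw [hv]
      have : ((k j' : ℤ)) + (t : ℤ) = (k j : ℤ) + 1 := by exact_mod_cast congrArg (Nat.cast (R := ℤ)) htt
      linarith
  -- up step inside segment j
  have upSeg : ∀ j, 1 ≤ j → j ≤ n → ∀ t, k j - 1 + t < k (j + 1) →
      x (k j + 2 * j - 1 + t + 1) = x (k j + 2 * j - 1 + t) + 1 := by
    intro j hj1 hjn t ht
    have h1 := hx2 j hj1 hjn t (le_of_lt ht)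
    have h2 := hx2 j hj1 hjn (t + 1) (by omega)
    rw [show k j + 2 * j - 1 + t + 1 = k j + 2 * j - 1 + (t + 1) from by omega, h2, h1]
    push_cast; ring
  -- up step in initial segment
  have upInit : ∀ i, 1 ≤ i → i < k 1 → x (i + 1) = x i + 1 := by
    intro i h1 h2
    rw [hx1 i h1 (le_of_lt h2), hx1 (i + 1) (by omega) h2]
    push_cast; ring
  -- down step: x (k j + 2j - 1) = x (k j + 2j - 2) - 1
  have downStep : ∀ j, 1 ≤ j → j ≤ n → x (k j + 2 * j - 1) = x (k j + 2 * j - 2) - 1 := by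
    intro j hj1 hjn
    rw [downAt j hj1 hjn, valEnd j hj1 hjn]
  -- L sequence
  have Llem : ∀ j, j ≤ n → Lseq x j = (if j = 0 then 0 else k j + 2 * j - 2) := by
    intro j
    induction j with
    | zero => intro _; simp [Lseq]
    | succ j ih =>
      intro hjn
      have hprev := ih (by omega)
      have hkj1 : 1 ≤ k (j + 1) := hpos (j + 1) (by omega) hjn
      have hLj : Lseq x j < k (j + 1) + 2 * (j + 1) - 2 := by
        rw [hprev]
        split
        · omega
        · have hj1 : 1 ≤ j := by omega
          have := hcond j hj1 (by omega)
          omega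
      have hmem : Lseq x j < k (j + 1) + 2 * (j + 1) - 2 ∧
          x (k (j + 1) + 2 * (j + 1) - 2 + 1) = x (k (j + 1) + 2 * (j + 1) - 2) - 1 := by
        refine ⟨hLj, ?_⟩
        rw [show k (j + 1) + 2 * (j + 1) - 2 + 1 = k (j + 1) + 2 * (j + 1) - 1 from by omega]
        exact downStep (j + 1) (by omega) hjn
      have hlb : ∀ i, Lseq x j < i ∧ x (i + 1) = x i - 1 → k (j + 1) + 2 * (j + 1) - 2 ≤ i := by
        intro i hi
        obtain ⟨hi1, hi2⟩ := hi
        by_contra hlt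
        push_neg at hlt
        rw [hprev] at hi1
        rcases Nat.eq_zero_or_pos j with h | h
        · subst h
          have e1 : k (0 + 1) = k 1 := rfl
          rw [if_pos rfl] at hi1
          have hik : i < k 1 := by omega
          have := upInit i hi1 hik
          omega
        · rw [if_neg (by omega : ¬ j = 0)] at hi1
          have hkj : 1 ≤ k j := hpos j h (by omega)
          obtain ⟨t, htt⟩ : ∃ t, i = k j + 2 * j - 1 + t := ⟨i - (k j + 2 * j - 1), by omega⟩
          have hts : k j - 1 + t < k (j + 1) := by omega
          have := upSeg j h (by omega) t hts
          rw [← htt] at this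
          omega
      have hS : Lseq x (j + 1) = sInf {i : ℕ | Lseq x j < i ∧ x (i + 1) = x i - 1} := rfl
      have hne : {i : ℕ | Lseq x j < i ∧ x (i + 1) = x i - 1}.Nonempty :=
        ⟨k (j + 1) + 2 * (j + 1) - 2, hmem⟩
      have h1 : Lseq x (j + 1) ≤ k (j + 1) + 2 * (j + 1) - 2 := by
        rw [hS]; exact Nat.sInf_le hmem
      have h2 : k (j + 1) + 2 * (j + 1) - 2 ≤ Lseq x (j + 1) := by
        rw [hS]; exact hlb _ (Nat.sInf_mem hne)
      rw [if_neg (Nat.succ_ne_zero j)]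
      omega
  constructor
  · refine ⟨hx1 1 le_rfl hk1 ▸ by norm_num, ?_, ?_, ?_⟩
    · -- steps
      intro i hi1 hi2
      by_cases hik : i ≤ k 1
      · rcases lt_or_eq_of_le hik with h | h
        · exact hstep _ _ (Or.inl (upInit i hi1 h))
        · have hd := downAt 1 le_rfl hn
          rw [show k 1 + 2 * 1 - 1 = i + 1 from by omega] at hd
          refine hstep _ _ (Or.inr ?_)
          rw [hd, hx1 i hi1 (le_of_eq h)]
          have : (i : ℤ) = (k 1 : ℤ) := by exact_mod_cast h
          rw [this]
      · obtain ⟨j, t, hj1, hjn, ht, hmeq⟩ := cover i (by omega) (by omega)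
        rcases lt_or_eq_of_le ht with h | h
        · refine hstep _ _ (Or.inl ?_)
          have := upSeg j hj1 hjn t h
          rw [← hmeq] at this
          exact this
        · have hkj : 1 ≤ k j := hpos j hj1 hjn
          have hjn' : j < n := by
            by_contra hc
            have : j = n := by omega
            subst this
            omega
          have hd := downAt (j + 1) (by omega) hjn'
          rw [show k (j + 1) + 2 * (j + 1) - 1 = i + 1 from by omega] at hd
          have hv := hx2 j hj1 hjn t ht
          rw [← hmeq] at hv
          refine hstep _ _ (Or.inr ?_)
          rw [hd, hv]
          omega
    · -- nonnegativity
      intro i hi1 hi2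
      by_cases hik : i ≤ k 1
      · rw [hx1 i hi1 hik]; positivity
      · obtain ⟨j, t, hj1, hjn, ht, hmeq⟩ := cover i (by omega) (by omega)
        have hkj : 1 ≤ k j := hpos j hj1 hjn
        have hv := hx2 j hj1 hjn t ht
        rw [← hmeq] at hv
        rw [hv]
        omega
    · -- endpoint
      have := hx2 n hn le_rfl 0 (by omega)
      rw [show k n + 2 * n - 1 + 0 = 2 * n from by omega] at this
      rw [this, hlast]
      norm_num
  · intro j hj1 hjn
    have := Llem j hjn
    rw [if_neg (by omega : ¬ j = 0)] at this
    unfold Kseq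
    rw [this]
    exact valEnd j hj1 hjn
end

section
/- Let n ≥ 1 and let x and x̃ be Dyck paths of length 2n. If K_j(x) = K_j(x̃) for all j = 1, …, n, then x = x̃; that is, the map x ↦ (K_1(x), …, K_n(x)) is injective on Dyck paths of length 2n. (Uniqueness part of Lemma 2) -/
/-
Before the `j`-th descent exactly `j - 1` steps of a Dyck path go down, so on the up-run
`(L_{j-1}, L_j]` the path is `x_i = i - 2(j - 1)`. Hence `L_j = K_j + 2(j - 1)`: the values `K_j`
determine the descent positions `L_j`, and these determine the path, since the runs
`(L_0, L_1], …, (L_{n-1}, L_n]` cover `1, …, 2n - 1` and `x_{2n} = 0`.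
-/

theorem exists_lt_and_le_apply_succ {α : Type*} [LinearOrder α] (f : ℕ → α) {a : α} {n : ℕ}
    (h0 : f 0 < a) (hn : a ≤ f n) : ∃ j < n, f j < a ∧ a ≤ f (j + 1) := by
  induction n with
  | zero => exact absurd hn (not_le.2 h0)
  | succ n ih =>
    by_cases h : a ≤ f n
    · obtain ⟨j, hj, hfj⟩ := ih h
      exact ⟨j, by omega, hfj⟩
    · exact ⟨n, n.lt_succ_self, not_le.1 h, hn⟩

theorem eq_add_of_forall_succ_eq_add_one {x : ℕ → ℤ} {a b : ℕ}
    (h : ∀ i, a ≤ i → i < b → x (i + 1) = x i + 1) {i : ℕ} (hai : a ≤ i) (hib : i ≤ b) :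
    x i = x a + (i - a) := by
  induction i, hai using Nat.le_induction with
  | base => simp
  | succ i hai ih =>
    rw [h i hai (by omega), ih (by omega)]
    push_cast
    ring

namespace IsDyckPath

variable {n : ℕ} {x : ℕ → ℤ}

theorem step_eq (hx : IsDyckPath n x) {i : ℕ} (h1 : 1 ≤ i) (h2 : i < 2 * n) :
    x (i + 1) = x i + 1 ∨ x (i + 1) = x i - 1 := by
  rcases abs_eq zero_le_one |>.mp (hx.2.1 i h1 h2) with h | h
  · left; linarith
  · right; linarith

theorem lseq_succ_spec_of_level (hx : IsDyckPath n x) {j : ℕ} (hj : j < n)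
    (hlt : Lseq x j < 2 * n) (hlevel : x (Lseq x j + 1) = Lseq x j + 1 - 2 * j) :
    Lseq x j < Lseq x (j + 1) ∧ Lseq x (j + 1) < 2 * n ∧
      x (Lseq x (j + 1) + 1) = x (Lseq x (j + 1)) - 1 ∧
      ∀ i, Lseq x j < i → i ≤ Lseq x (j + 1) → x i = i - 2 * j := by
  set m := Lseq x j
  set S := {i | m < i ∧ x (i + 1) = x i - 1}
  have hLS : Lseq x (j + 1) = sInf S := rfl
  have up_run : ∀ k ≤ 2 * n, (∀ i, m < i → i < k → i ∉ S) →
      ∀ i, m < i → i ≤ k → x i = i - 2 * j := by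
    intro k hk hS i hmi hik
    have hup : ∀ i, m + 1 ≤ i → i < k → x (i + 1) = x i + 1 := fun i hmi hik ↦
      (hx.step_eq (by omega) (by omega)).resolve_right fun hdown ↦ hS i hmi hik ⟨hmi, hdown⟩
    rw [eq_add_of_forall_succ_eq_add_one hup hmi hik, hlevel]
    push_cast
    ring
  -- Without a descent in `(m, 2n)` the path would end at height `2n - 2j > 0`.
  obtain ⟨w, hwS, hw⟩ : ∃ w ∈ S, w < 2 * n := by
    by_contra! hS
    have := up_run (2 * n) le_rfl (fun i _ hi hiS ↦ (hS i hiS).not_gt hi) (2 * n) (by omega) le_rfl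
    rw [hx.2.2.2] at this
    push_cast at this
    omega
  have hmem : sInf S ∈ S := Nat.sInf_mem ⟨w, hwS⟩
  have hle : sInf S ≤ w := Nat.sInf_le hwS
  rw [hLS]
  exact ⟨hmem.1, by omega, hmem.2,
    up_run (sInf S) (by omega) fun i _ hi ↦ Nat.notMem_of_lt_sInf hi⟩

theorem lseq_lt_and_level (hx : IsDyckPath n x) {j : ℕ} (hj : j < n) :
    Lseq x j < 2 * n ∧ x (Lseq x j + 1) = Lseq x j + 1 - 2 * j := by
  induction j with
  | zero => exact ⟨show 0 < 2 * n by omega, by simpa [Lseq] using hx.1⟩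
  | succ j ih =>
    obtain ⟨hlo, hlt, hdown, hval⟩ :=
      hx.lseq_succ_spec_of_level (by omega) (ih (by omega)).1 (ih (by omega)).2
    refine ⟨hlt, ?_⟩
    rw [hdown, hval _ hlo le_rfl]
    push_cast
    ring

theorem lseq_succ_spec (hx : IsDyckPath n x) {j : ℕ} (hj : j < n) :
    Lseq x j < Lseq x (j + 1) ∧ Lseq x (j + 1) < 2 * n ∧
      x (Lseq x (j + 1) + 1) = x (Lseq x (j + 1)) - 1 ∧
      ∀ i, Lseq x j < i → i ≤ Lseq x (j + 1) → x i = i - 2 * j :=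
  hx.lseq_succ_spec_of_level hj (hx.lseq_lt_and_level hj).1 (hx.lseq_lt_and_level hj).2

theorem apply_eq_of_lseq_lt_of_le (hx : IsDyckPath n x) {j i : ℕ} (hj : j < n)
    (hlo : Lseq x j < i) (hhi : i ≤ Lseq x (j + 1)) : x i = i - 2 * j :=
  (hx.lseq_succ_spec hj).2.2.2 i hlo hhi

theorem lseq_succ_eq_kseq_add (hx : IsDyckPath n x) {j : ℕ} (hj : j < n) :
    (Lseq x (j + 1) : ℤ) = Kseq x (j + 1) + 2 * j := by
  rw [Kseq, hx.apply_eq_of_lseq_lt_of_le hj (hx.lseq_succ_spec hj).1 le_rfl]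
  ring

theorem two_mul_le_lseq_add_one (hx : IsDyckPath n x) (hn : 1 ≤ n) :
    2 * n ≤ Lseq x n + 1 := by
  obtain ⟨m, rfl⟩ : ∃ m, n = m + 1 := ⟨n - 1, by omega⟩
  obtain ⟨hlo, hlt, hdown, hval⟩ := hx.lseq_succ_spec m.lt_succ_self
  have hnonneg : 0 ≤ x (Lseq x (m + 1) + 1) := by
    rcases Nat.lt_or_ge (Lseq x (m + 1) + 1) (2 * (m + 1)) with h | h
    · exact hx.2.2.1 _ (by omega) (by omega)
    · rw [show Lseq x (m + 1) + 1 = 2 * (m + 1) by omega, hx.2.2.2]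
  rw [hdown, hval _ hlo le_rfl] at hnonneg
  omega

end IsDyckPath

/-- Uniqueness part of Lemma 2: two Dyck paths of length `2n` with the same values
`K_1, …, K_n` agree (on all the indices `1, …, 2n`); i.e. the map
`x ↦ (K_1(x), …, K_n(x))` is injective on Dyck paths of length `2n`. -/
theorem stmt_5 (n : ℕ) (hn : 1 ≤ n) (x y : ℕ → ℤ)
    (hx : IsDyckPath n x) (hy : IsDyckPath n y)
    (h : ∀ j, 1 ≤ j → j ≤ n → Kseq x j = Kseq y j) :
    ∀ i, 1 ≤ i → i ≤ 2 * n → x i = y i := by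
  have hL : ∀ j ≤ n, Lseq x j = Lseq y j := by
    rintro (_ | j) hj
    · rfl
    · have := hx.lseq_succ_eq_kseq_add hj
      rw [h (j + 1) (by omega) hj, ← hy.lseq_succ_eq_kseq_add hj] at this
      exact_mod_cast this
  intro i hi1 hi2
  rcases hi2.lt_or_eq with hi | rfl
  · obtain ⟨j, hj, hlo, hhi⟩ := exists_lt_and_le_apply_succ (Lseq x) (a := i) (n := n) hi1
      (by have := hx.two_mul_le_lseq_add_one hn; omega)
    rw [hx.apply_eq_of_lseq_lt_of_le hj hlo hhi,
      hy.apply_eq_of_lseq_lt_of_le hj (hL j hj.le ▸ hlo) (hL (j + 1) hj ▸ hhi)]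
  · rw [hx.2.2.2, hy.2.2.2]
end

section
/- Let n ≥ 1. The map x ↦ (K_1(x), …, K_n(x)) is a bijection from the set of Dyck paths of length 2n onto the set of tuples (k_1, …, k_n) of positive integers satisfying k_{i+1} ≥ k_i − 1 for all 1 ≤ i < n and k_n = 1. -/
/-!
Call `i ≥ 1` a descent of `x` if `x (i + 1) = x i - 1`. Then `L_{j+1}(x)` is the `j`-th descent
(`Nat.nth`), and a path with `x 1 = 1` and unit steps is `x i = i - 2 · #{descents below i}`.
A Dyck path has exactly `n` descents below `2n`, so `K_{j+1} = L_{j+1} - 2j`: positivity of `K`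
is nonnegativity of the path just after a descent, `K_i - 1 ≤ K_{i+1}` is `L_i < L_{i+1}`, and
`K_n = 1` since `L_n ≤ 2n - 1`. Conversely, the descent positions `L_{j+1} = k_{j+1} + 2j`
determine the path, and for an admissible `k` they define a Dyck path with `K = k`.
-/

open Finset Nat

-- `0 < i` because `L_{j+1} > L_0 = 0`: the value `x 0` is not part of the path.
def IsDescent (x : ℕ → ℤ) (i : ℕ) : Prop := 0 < i ∧ x (i + 1) = x i - 1

instance (x : ℕ → ℤ) : DecidablePred (IsDescent x) := fun _ => instDecidableAnd

theorem Lseq_succ_eq_nth_s6 {x : ℕ → ℤ} {N : ℕ} :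
    ∀ {j : ℕ}, j < count (IsDescent x) N → Lseq x (j + 1) = nth (IsDescent x) j
  | 0, _ => by rw [nth_zero]; rfl
  | j + 1, hj => by
    have hj' : ∀ hf : (Set.ofPred (IsDescent x)).Finite, j < #hf.toFinset :=
      fun hf => (lt_of_succ_lt hj).trans_le (count_le_card hf N)
    calc Lseq x (j + 2) = sInf {i | nth (IsDescent x) j < i ∧ x (i + 1) = x i - 1} := by
          rw [Lseq, Lseq_succ_eq_nth_s6 (lt_of_succ_lt hj)]
      _ = sInf {i | IsDescent x i ∧ nth (IsDescent x) j + 1 ≤ i} := by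
          congr 1
          ext i
          simp only [IsDescent, Set.mem_ofPred_eq]
          omega
      _ = nth (IsDescent x) (j + 1) := by rw [← nth_count_eq_sInf, count_nth_succ hj']

theorem eq_sub_two_mul_count {x : ℕ → ℤ} {N : ℕ} (h1 : x 1 = 1)
    (hstep : ∀ i, 1 ≤ i → i < N → |x (i + 1) - x i| = 1) {i : ℕ} (hi : 1 ≤ i) (hiN : i ≤ N) :
    x i = i - 2 * count (IsDescent x) i := by
  induction i, hi using Nat.le_induction with
  | base => simp [h1, count_one, IsDescent]
  | succ i hi ih =>
    have hxi := ih (by omega)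
    have hx := abs_eq (zero_le_one' ℤ) |>.mp (hstep i hi (by omega))
    rw [count_succ]
    by_cases hd : IsDescent x i
    · have := hd.2
      simp only [hd, if_true]
      push_cast
      omega
    · have : x (i + 1) ≠ x i - 1 := fun h => hd ⟨hi, h⟩
      simp only [hd, if_false]
      push_cast
      omega

namespace IsDyckPath

variable {n : ℕ} {x : ℕ → ℤ}

theorem nonneg (hx : IsDyckPath n x) {i : ℕ} (hi : 1 ≤ i) (hin : i ≤ 2 * n) : 0 ≤ x i := by
  rcases hin.lt_or_eq with h | rfl
  · exact hx.2.2.1 i hi (by omega)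
  · exact hx.2.2.2.ge

theorem eq_sub_two_mul_count (hx : IsDyckPath n x) {i : ℕ} (hi : 1 ≤ i) (hin : i ≤ 2 * n) :
    x i = i - 2 * count (IsDescent x) i :=
  _root_.eq_sub_two_mul_count hx.1 hx.2.1 hi hin

theorem count_isDescent (hx : IsDyckPath n x) (hn : 1 ≤ n) : count (IsDescent x) (2 * n) = n := by
  have := hx.eq_sub_two_mul_count (i := 2 * n) (by omega) le_rfl
  rw [hx.2.2.2] at this
  omega

theorem lt_card_descents (hx : IsDyckPath n x) {j : ℕ} (hj : j < n)
    (hf : (Set.ofPred (IsDescent x)).Finite) : j < #hf.toFinset :=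
  (hx.count_isDescent (by omega)).symm ▸ hj |>.trans_le (count_le_card hf _)

theorem isDescent_nth (hx : IsDyckPath n x) {j : ℕ} (hj : j < n) :
    IsDescent x (nth (IsDescent x) j) :=
  nth_mem _ (hx.lt_card_descents hj)

theorem nth_lt (hx : IsDyckPath n x) {j : ℕ} (hj : j < n) : nth (IsDescent x) j < 2 * n :=
  nth_lt_of_lt_count (by rwa [hx.count_isDescent (by omega)])

theorem isDescent_iff (hx : IsDyckPath n x) {i : ℕ} (hi : i < 2 * n) :
    IsDescent x i ↔ ∃ j < n, nth (IsDescent x) j = i := by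
  refine ⟨fun h => ⟨count (IsDescent x) i, ?_, nth_count h⟩,
    fun ⟨j, hj, h⟩ => h ▸ hx.isDescent_nth hj⟩
  simpa [hx.count_isDescent (by omega)] using count_strict_mono h hi

theorem Lseq_succ (hx : IsDyckPath n x) {j : ℕ} (hj : j < n) :
    Lseq x (j + 1) = nth (IsDescent x) j :=
  Lseq_succ_eq_nth_s6 (N := 2 * n) (by rwa [hx.count_isDescent (by omega)])

theorem Kseq_succ (hx : IsDyckPath n x) {j : ℕ} (hj : j < n) :
    Kseq x (j + 1) = nth (IsDescent x) j - 2 * j := by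
  rw [Kseq, hx.Lseq_succ hj,
    hx.eq_sub_two_mul_count (hx.isDescent_nth hj).1 (hx.nth_lt hj).le,
    count_nth (hx.lt_card_descents hj)]

theorem Kseq_pos (hx : IsDyckPath n x) {j : ℕ} (hj : 1 ≤ j) (hjn : j ≤ n) : 0 < Kseq x j := by
  obtain ⟨j, rfl⟩ := Nat.exists_eq_add_of_le' hj
  have hdesc := (hx.isDescent_nth hjn).2
  have := hx.nonneg (Nat.le_add_left 1 _) (hx.nth_lt hjn)
  rw [Kseq, hx.Lseq_succ hjn]
  omega

theorem Kseq_sub_one_le (hx : IsDyckPath n x) {i : ℕ} (hi : 1 ≤ i) (hin : i < n) :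
    Kseq x i - 1 ≤ Kseq x (i + 1) := by
  obtain ⟨j, rfl⟩ := Nat.exists_eq_add_of_le' hi
  have := nth_lt_nth' (lt_add_one j) (hx.lt_card_descents hin)
  rw [hx.Kseq_succ (by omega), hx.Kseq_succ hin]
  push_cast
  omega

theorem Kseq_last (hx : IsDyckPath n x) (hn : 1 ≤ n) : Kseq x n = 1 := by
  obtain ⟨m, rfl⟩ := Nat.exists_eq_add_of_le' hn
  have hpos := hx.Kseq_pos hn le_rfl
  have := hx.nth_lt (lt_add_one m)
  rw [hx.Kseq_succ (lt_add_one m)] at hpos ⊢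
  omega

theorem eqOn_of_eqOn_Kseq {y : ℕ → ℤ} (hx : IsDyckPath n x) (hy : IsDyckPath n y)
    (hK : Set.EqOn (Kseq x) (Kseq y) (Set.Icc 1 n)) : Set.EqOn x y (Set.Icc 1 (2 * n)) := by
  have hnth : ∀ j < n, nth (IsDescent x) j = nth (IsDescent y) j := fun j hj => by
    have := hK ⟨Nat.le_add_left 1 j, hj⟩
    rw [hx.Kseq_succ hj, hy.Kseq_succ hj] at this
    omega
  have hdesc : ∀ i < 2 * n, IsDescent x i ↔ IsDescent y i := fun i hi => by
    rw [hx.isDescent_iff hi, hy.isDescent_iff hi]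
    exact exists_congr fun j => and_congr_right fun hj => by rw [hnth j hj]
  rintro i ⟨hi, hin⟩
  have hcount : count (IsDescent x) i = count (IsDescent y) i :=
    le_antisymm (count_mono_left fun m hm => (hdesc m (by omega)).1)
      (count_mono_left fun m hm => (hdesc m (by omega)).2)
  rw [hx.eq_sub_two_mul_count hi hin, hy.eq_sub_two_mul_count hi hin, hcount]

end IsDyckPath

-- The path from `x 0 = 0` stepping down right after the positions `l j` (`j < n`), up elsewhere.
def descentPath (n : ℕ) (l : ℕ → ℕ) (i : ℕ) : ℤ := i - 2 * count (· ∈ (range n).image l) i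

section descentPath

variable {n : ℕ} {l : ℕ → ℕ}

theorem count_mem_image_apply (hl : StrictMonoOn l (Set.Iio n)) {j : ℕ} (hj : j < n) :
    count (· ∈ (range n).image l) (l j) = j := by
  have hfilter : {m ∈ range (l j) | m ∈ (range n).image l} = (range j).image l := by
    ext m
    simp only [mem_filter, mem_range, mem_image]
    constructor
    · rintro ⟨hm, i, hi, rfl⟩
      exact ⟨i, (hl.lt_iff_lt hi hj).1 hm, rfl⟩
    · rintro ⟨i, hi, rfl⟩
      exact ⟨hl (hi.trans hj) hj hi, i, hi.trans hj, rfl⟩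
  rw [count_eq_card_filter_range, hfilter,
    Finset.card_image_of_injOn (hl.injOn.mono fun i hi => (mem_range.1 hi).trans hj), card_range]

theorem descentPath_apply (hl : StrictMonoOn l (Set.Iio n)) {j : ℕ} (hj : j < n) :
    descentPath n l (l j) = l j - 2 * j := by
  rw [descentPath, count_mem_image_apply hl hj]

theorem descentPath_succ (i : ℕ) :
    descentPath n l (i + 1) = descentPath n l i + if i ∈ (range n).image l then -1 else 1 := by
  simp only [descentPath, count_succ]
  split_ifs <;> push_cast <;> ring

theorem isDescent_descentPath_iff (hgt : ∀ j < n, 2 * j < l j) {i : ℕ} :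
    IsDescent (descentPath n l) i ↔ i ∈ (range n).image l := by
  rw [IsDescent, descentPath_succ]
  constructor
  · rintro ⟨-, h⟩
    by_contra hi
    rw [if_neg hi] at h
    omega
  · intro hi
    obtain ⟨j, hj, rfl⟩ := mem_image.1 hi
    exact ⟨by have := hgt j (mem_range.1 hj); omega, by simp [hi]; ring⟩

theorem isDyckPath_descentPath (hn : 1 ≤ n) (hl : StrictMonoOn l (Set.Iio n))
    (hgt : ∀ j < n, 2 * j < l j) (hlast : l (n - 1) = 2 * n - 1) :
    IsDyckPath n (descentPath n l) := by
  have hzero : 0 ∉ (range n).image l := by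
    simp only [mem_image, mem_range, not_exists, not_and]
    exact fun j hj h => by have := hgt j hj; omega
  have hnonneg : ∀ i, 0 ≤ descentPath n l i := by
    intro i
    induction i with
    | zero => simp [descentPath]
    | succ i ih =>
      rw [descentPath_succ]
      split_ifs with hi
      · obtain ⟨j, hj, rfl⟩ := mem_image.1 hi
        have := hgt j (mem_range.1 hj)
        rw [descentPath_apply hl (mem_range.1 hj)]
        omega
      · omega
  refine ⟨?_, fun i _ _ => ?_, fun i _ _ => hnonneg i, ?_⟩
  · simpa [descentPath, hzero] using descentPath_succ (n := n) (l := l) 0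
  · rw [descentPath_succ]
    split_ifs <;> simp
  · have h2n : 2 * n = l (n - 1) + 1 := by omega
    rw [h2n, descentPath_succ, if_pos (mem_image_of_mem l (mem_range.2 (by omega))),
      descentPath_apply hl (by omega)]
    omega

theorem Kseq_descentPath (hn : 1 ≤ n) (hl : StrictMonoOn l (Set.Iio n))
    (hgt : ∀ j < n, 2 * j < l j) (hlast : l (n - 1) = 2 * n - 1) {j : ℕ} (hj : j < n) :
    Kseq (descentPath n l) (j + 1) = l j - 2 * j := by
  have hnth : nth (IsDescent (descentPath n l)) = nth (· ∈ (range n).image l) :=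
    congrArg nth (funext fun i => propext (isDescent_descentPath_iff hgt))
  rw [(isDyckPath_descentPath hn hl hgt hlast).Kseq_succ hj, hnth,
    ← count_mem_image_apply hl hj, nth_count (mem_image_of_mem l (mem_range.2 hj)),
    count_mem_image_apply hl hj]

end descentPath

theorem exists_isDyckPath_Kseq_eq {n : ℕ} {k : ℕ → ℕ} (hn : 1 ≤ n)
    (hkpos : ∀ i, 1 ≤ i → i ≤ n → 0 < k i) (hkstep : ∀ i, 1 ≤ i → i < n → k i ≤ k (i + 1) + 1)
    (hkn : k n = 1) : ∃ x : ℕ → ℤ, IsDyckPath n x ∧ ∀ j, 1 ≤ j → j ≤ n → Kseq x j = (k j : ℤ) := by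
  set l : ℕ → ℕ := fun j => k (j + 1) + 2 * j
  have hl : StrictMonoOn l (Set.Iio n) :=
    strictMonoOn_of_lt_succ Set.ordConnected_Iio fun j _ _ hj => by
      have := hkstep (j + 1) (by omega) (Set.mem_Iio.1 hj)
      simp only [l, Order.succ_eq_add_one]
      omega
  have hgt : ∀ j < n, 2 * j < l j := fun j hj => by
    have := hkpos (j + 1) (by omega) hj
    simp only [l]
    omega
  have hlast : l (n - 1) = 2 * n - 1 := by
    simp only [l, Nat.sub_add_cancel hn, hkn]
    omega
  refine ⟨descentPath n l, isDyckPath_descentPath hn hl hgt hlast, fun j hj hjn => ?_⟩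
  obtain ⟨j, rfl⟩ := Nat.exists_eq_add_of_le' hj
  rw [Kseq_descentPath hn hl hgt hlast hjn]
  push_cast [l]
  ring

/-- The map `x ↦ (K_1(x), …, K_n(x))` is a bijection from Dyck paths of length `2n`
onto tuples `(k 1, …, k n)` of positive integers with `k (i+1) ≥ k i - 1` for
`1 ≤ i < n` and `k n = 1`: it maps into the set of such tuples, it is surjective onto
it, and it is injective (Dyck paths with the same `K`-tuple agree on `1, …, 2n`). -/
theorem stmt_6 (n : ℕ) (hn : 1 ≤ n) :
    (∀ x : ℕ → ℤ, IsDyckPath n x →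
        (∀ j, 1 ≤ j → j ≤ n → 0 < Kseq x j) ∧
        (∀ i, 1 ≤ i → i < n → Kseq x i - 1 ≤ Kseq x (i + 1)) ∧ Kseq x n = 1) ∧
    (∀ k : ℕ → ℕ, (∀ i, 1 ≤ i → i ≤ n → 0 < k i) →
        (∀ i, 1 ≤ i → i < n → k i ≤ k (i + 1) + 1) → k n = 1 →
        ∃ x : ℕ → ℤ, IsDyckPath n x ∧ ∀ j, 1 ≤ j → j ≤ n → Kseq x j = (k j : ℤ)) ∧
    (∀ x y : ℕ → ℤ, IsDyckPath n x → IsDyckPath n y →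
        (∀ j, 1 ≤ j → j ≤ n → Kseq x j = Kseq y j) →
        ∀ i, 1 ≤ i → i ≤ 2 * n → x i = y i) := by
  refine ⟨fun x hx => ⟨fun j => hx.Kseq_pos, fun i => hx.Kseq_sub_one_le, hx.Kseq_last hn⟩,
    fun k => exists_isDyckPath_Kseq_eq hn, fun x y hx hy hK i hi hin =>
      hx.eqOn_of_eqOn_Kseq hy (fun j hj => hK j hj.1 hj.2) ⟨hi, hin⟩⟩
end

section
/- Let n ≥ 1. The number of tuples (k_1, …, k_n) of positive integers satisfying k_{i+1} ≥ k_i − 1 for all 1 ≤ i < n and k_n = 1 equals the n-th Catalan number C_n = (1/(n+1))·binom(2n, n). -/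
/-!
Let `N(m, c)` count the positive tuples of length `m` with `k_{i+1} ≥ k_i - 1` and last entry at
most `c`; the theorem asks for `N(n, 1)`. Removing the last entry `v ∈ [1, c]` leaves a tuple
counted by `N(m, v + 1)`, which gives the ballot recursion
`N(m + 1, c + 1) = N(m + 1, c) + N(m, c + 2)`. Hence
`N(m + 1, c) = C(2m + c + 1, m + 1) - C(2m + c + 1, m)` by Pascal's rule, and for `c = 1` this is
the Catalan number `C_{m+1}`.
-/

open Finset

def IsBallotTuple (c : ℕ) {m : ℕ} (k : Fin m → ℕ) : Prop :=
  (∀ i, 0 < k i) ∧ (∀ i j : Fin m, (j : ℕ) = i + 1 → k i ≤ k j + 1) ∧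
    ∀ i : Fin m, (i : ℕ) = m - 1 → k i ≤ c

theorem isBallotTuple_snoc_iff {c m : ℕ} {k : Fin m → ℕ} {v : ℕ} :
    IsBallotTuple c (Fin.snoc k v : Fin (m + 1) → ℕ) ↔
      0 < v ∧ v ≤ c ∧ IsBallotTuple (v + 1) k := by
  simp only [IsBallotTuple, Fin.forall_fin_succ', Fin.snoc_castSucc, Fin.snoc_last,
    Fin.val_castSucc, Fin.val_last, forall_and, add_tsub_cancel_right]
  constructor
  · rintro ⟨⟨hpos, hv⟩, ⟨⟨hstep, -⟩, hlast, -⟩, -, hc⟩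
    exact ⟨hv, hc trivial, hpos, hstep, fun i hi => hlast i (by omega)⟩
  · rintro ⟨hv, hc, hpos, hstep, hlast⟩
    exact ⟨⟨hpos, hv⟩, ⟨⟨hstep, fun i hi => by omega⟩, fun i hi => hlast i (by omega), by omega⟩,
      fun i hi => by omega, fun _ => hc⟩

theorem isBallotTuple_one_iff {n : ℕ} (k : Fin n → ℕ) :
    IsBallotTuple 1 k ↔ (∀ i, 0 < k i) ∧ (∀ i j : Fin n, (j : ℕ) = i + 1 → k i ≤ k j + 1) ∧
      ∀ i : Fin n, (i : ℕ) = n - 1 → k i = 1 := by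
  refine and_congr_right fun hpos => and_congr_right fun _ => forall_congr' fun i => ?_
  have := hpos i
  constructor <;> intro h hi <;> have := h hi <;> omega

def ballotTuples : (m : ℕ) → ℕ → Finset (Fin m → ℕ)
  | 0, _ => {Fin.elim0}
  | m + 1, c => (Icc 1 c).biUnion fun v => (ballotTuples m (v + 1)).image fun k => Fin.snoc k v

theorem mem_ballotTuples {m c : ℕ} {k : Fin m → ℕ} :
    k ∈ ballotTuples m c ↔ IsBallotTuple c k := by
  induction m generalizing c with
  | zero => simp [ballotTuples, IsBallotTuple, Subsingleton.elim k Fin.elim0]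
  | succ m ih =>
    simp only [ballotTuples, mem_biUnion, mem_image, mem_Icc, ih]
    constructor
    · rintro ⟨v, ⟨hv, hvc⟩, k, hk, rfl⟩
      exact isBallotTuple_snoc_iff.mpr ⟨hv, hvc, hk⟩
    · intro hk
      rw [← Fin.snoc_init_self k, isBallotTuple_snoc_iff] at hk
      exact ⟨_, ⟨hk.1, hk.2.1⟩, _, hk.2.2, Fin.snoc_init_self k⟩

theorem card_ballotTuples_succ (m c : ℕ) :
    #(ballotTuples (m + 1) c) = ∑ v ∈ Icc 1 c, #(ballotTuples m (v + 1)) := by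
  rw [ballotTuples, card_biUnion]
  · exact sum_congr rfl fun v _ => card_image_of_injective _ fun k l h => (Fin.snoc_inj.mp h).1
  · intro v _ w _ hvw
    simp only [Function.onFun, disjoint_left, mem_image]
    rintro _ ⟨k, -, rfl⟩ ⟨l, -, h⟩
    exact hvw (Fin.snoc_inj.mp h).2.symm

theorem card_ballotTuples_succ_succ (m c : ℕ) :
    #(ballotTuples (m + 1) (c + 1)) = #(ballotTuples (m + 1) c) + #(ballotTuples m (c + 2)) := by
  rw [card_ballotTuples_succ, card_ballotTuples_succ, sum_Icc_succ_top (by omega)]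

theorem card_ballotTuples_one_left (c : ℕ) : #(ballotTuples 1 c) = c := by
  rw [card_ballotTuples_succ]
  simp [ballotTuples]

theorem card_ballotTuples_add_choose (m c : ℕ) :
    #(ballotTuples (m + 1) c) + (2 * m + c + 1).choose m = (2 * m + c + 1).choose (m + 1) := by
  induction m generalizing c with
  | zero => simp [card_ballotTuples_one_left]
  | succ m ihm =>
    induction c with
    | zero => simp [card_ballotTuples_succ, Nat.choose_symm_half]
    | succ c ihc =>
      have hm := ihm (c + 2)
      rw [show 2 * m + (c + 2) + 1 = 2 * m + c + 3 by ring] at hm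
      rw [show 2 * (m + 1) + c + 1 = 2 * m + c + 3 by ring] at ihc
      rw [card_ballotTuples_succ_succ, show 2 * (m + 1) + (c + 1) + 1 = 2 * m + c + 3 + 1 by ring,
        Nat.choose_succ_succ' _ m, Nat.choose_succ_succ' _ (m + 1)]
      omega

theorem card_ballotTuples_one_right (n : ℕ) : #(ballotTuples n 1) = catalan n := by
  rcases n with _ | m
  · rw [catalan_zero]; rfl
  · have hsum : #(ballotTuples (m + 1) 1) + (2 * m + 2).choose m = (2 * m + 2).choose (m + 1) :=
      card_ballotTuples_add_choose m 1
    have hcat : (m + 2) * catalan (m + 1) = (2 * m + 2).choose (m + 1) := by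
      rw [succ_mul_catalan_eq_centralBinom, Nat.centralBinom_eq_two_mul_choose, mul_add_one]
    have hratio : (2 * m + 2).choose (m + 1) * (m + 1) = (2 * m + 2).choose m * (m + 2) := by
      rw [Nat.choose_succ_right_eq, show 2 * m + 2 - m = m + 2 by omega]
    apply Nat.eq_of_mul_eq_mul_left (show 0 < m + 2 by omega)
    nlinarith

theorem stmt_7_general (n : ℕ) :
    Nat.card {k : Fin n → ℕ // (∀ i, 0 < k i) ∧
        (∀ i j : Fin n, (j : ℕ) = (i : ℕ) + 1 → k i ≤ k j + 1) ∧
        (∀ i : Fin n, (i : ℕ) = n - 1 → k i = 1)} =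
      Nat.choose (2 * n) n / (n + 1) := by
  rw [← Nat.centralBinom_eq_two_mul_choose, ← catalan_eq_centralBinom_div,
    ← card_ballotTuples_one_right, ← Nat.card_eq_finsetCard]
  exact Nat.card_congr <| Equiv.subtypeEquivRight fun k => by
    rw [mem_ballotTuples, isBallotTuple_one_iff]

/-- The number of tuples `(k 0, …, k (n-1))` of positive integers (here `k i` stands
for `k_{i+1}`) satisfying `k_{i+1} ≥ k_i − 1` for all `1 ≤ i < n` and `k_n = 1` equals
the `n`-th Catalan number `C_n = binom(2n, n) / (n + 1)`. -/
theorem stmt_7 (n : ℕ) (hn : 1 ≤ n) :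
    Nat.card {k : Fin n → ℕ // (∀ i, 0 < k i) ∧
        (∀ i j : Fin n, (j : ℕ) = (i : ℕ) + 1 → k i ≤ k j + 1) ∧
        (∀ i : Fin n, (i : ℕ) = n - 1 → k i = 1)} =
      Nat.choose (2 * n) n / (n + 1) :=
  stmt_7_general n
end

section
/- Let n ≥ 1. Summing over all tuples (k_1, …, k_n) of positive integers satisfying k_{i+1} ≥ k_i − 1 for all 1 ≤ i < n and k_n = 1, one has ∑ 2^n · n! · ∏_{i=1}^n k_i = (2n)!; equivalently, the probabilities 2^n n! (∏ k_i)/(2n)! sum to one. -/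
open Finset

/-- `g n a` : sum of `∏ k i` over sequences `k : Fin n → ℕ` of positive integers with
`k (i+1) ≥ k i - 1`, `k (n-1) = 1` and `a ≤ k 0 + 1`. -/
def g : ℕ → ℕ → ℕ
  | 0, _ => 1
  | (n+1), a => ∑ b ∈ Finset.Icc 1 (n+1), if a ≤ b + 1 then b * g n b else 0

lemma g_zero (n c : ℕ) (h : n + 3 ≤ c) : g (n+1) c = 0 := by
  apply Finset.sum_eq_zero
  intro b hb
  rw [Finset.mem_Icc] at hb
  rw [if_neg (by omega)]

lemma g_one_two (n : ℕ) : g (n+1) 1 = g (n+1) 2 := by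
  apply Finset.sum_congr rfl
  intro b hb
  rw [Finset.mem_Icc] at hb
  rw [if_pos (by omega), if_pos (by omega)]

lemma sum_split (f : ℕ → ℕ) (N m : ℕ) (h1 : 1 ≤ m) (h2 : m ≤ N) :
    (∑ b ∈ Finset.Icc 1 N, if m ≤ b then f b else 0)
      = f m + ∑ b ∈ Finset.Icc 1 N, if m + 1 ≤ b then f b else 0 := by
  have hm : m ∈ Finset.Icc 1 N := Finset.mem_Icc.mpr ⟨h1, h2⟩
  rw [← Finset.add_sum_erase _ _ hm, if_pos le_rfl,
      ← Finset.add_sum_erase _ (fun b => if m + 1 ≤ b then f b else 0) hm, if_neg (by omega)]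
  rw [zero_add]
  apply congrArg
  apply Finset.sum_congr rfl
  intro b hb
  have := Finset.ne_of_mem_erase hb
  by_cases h : m ≤ b
  · rw [if_pos h, if_pos (by omega)]
  · rw [if_neg h, if_neg (by omega)]

lemma g_succ_rec (n m : ℕ) (h1 : 1 ≤ m) (h2 : m ≤ n + 1) :
    g (n+1) (m+1) = m * g n m + g (n+1) (m+2) := by
  show (∑ b ∈ Finset.Icc 1 (n+1), if m + 1 ≤ b + 1 then b * g n b else 0) = _
  have e1 : ∀ b : ℕ, (if m + 1 ≤ b + 1 then b * g n b else 0) = (if m ≤ b then b * g n b else 0) := by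
    intro b; by_cases h : m ≤ b
    · rw [if_pos h, if_pos (by omega)]
    · rw [if_neg h, if_neg (by omega)]
  have e2 : ∀ b : ℕ, (if m + 2 ≤ b + 1 then b * g n b else 0) = (if m + 1 ≤ b then b * g n b else 0) := by
    intro b; by_cases h : m + 1 ≤ b
    · rw [if_pos h, if_pos (by omega)]
    · rw [if_neg h, if_neg (by omega)]
  simp only [e1]
  rw [sum_split (fun b => b * g n b) (n+1) m h1 h2]
  show _ = m * g n m + (∑ b ∈ Finset.Icc 1 (n+1), if m + 2 ≤ b + 1 then b * g n b else 0)
  simp only [e2]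

lemma g_formula : ∀ n, 1 ≤ n → ∀ d m, m + d = n →
    2 ^ d * Nat.factorial d * g n (m + 1) = Nat.factorial (n + d) := by
  intro n
  induction n with
  | zero => omega
  | succ n ih =>
    intro _ d
    induction d with
    | zero =>
      intro m hm
      -- m = n + 1
      obtain rfl : m = n + 1 := by omega
      rcases Nat.eq_zero_or_pos n with rfl | hn
      · decide
      · have hrec := g_succ_rec n (n+1) (by omega) le_rfl
        have hz := g_zero n (n+3) le_rfl
        have hgn : g n (n + 1) = Nat.factorial n := by
          have := ih hn 0 n (by omega)
          simpa using this
        simp only [pow_zero, Nat.factorial_zero, one_mul]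
        rw [hrec, hz, hgn, add_zero, Nat.add_zero, ← Nat.factorial_succ]
    | succ d ihd =>
      intro m hm
      have hd : m + d = n := by omega
      have hY := ihd (m+1) (by omega)
      rcases Nat.eq_zero_or_pos m with rfl | hm1
      · -- m = 0, d = n
        obtain rfl : d = n := by omega
        rcases Nat.eq_zero_or_pos d with rfl | hn
        · decide
        · rw [show (0:ℕ) + 1 = 1 from rfl, g_one_two]
          have hY' : 2 ^ d * Nat.factorial d * g (d+1) 2 = Nat.factorial (d + 1 + d) := by
            simpa using hY
          calc 2 ^ (d+1) * Nat.factorial (d+1) * g (d+1) 2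
              = (2 * (d+1)) * (2 ^ d * Nat.factorial d * g (d+1) 2) := by
                rw [pow_succ, Nat.factorial_succ]; ring
            _ = (2 * (d+1)) * Nat.factorial (d + 1 + d) := by rw [hY']
            _ = Nat.factorial (d + 1 + (d + 1)) := by
                have h5 : d + 1 + (d + 1) = (d + 1 + d) + 1 := by omega
                rw [h5, Nat.factorial_succ]
                ring_nf
      · -- m ≥ 1
        have hrec := g_succ_rec n m hm1 (by omega)
        have hX : 2 ^ (d+1) * Nat.factorial (d+1) * g n m = Nat.factorial (n + d + 1) := by
          have h := ih (by omega) (d+1) (m-1) (by omega)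
          have h1 : m - 1 + 1 = m := by omega
          have h2 : n + (d + 1) = n + d + 1 := by omega
          rwa [h1, h2] at h
        have hY' : 2 ^ d * Nat.factorial d * g (n+1) (m+2) = Nat.factorial (n + d + 1) := by
          have h2 : n + 1 + d = n + d + 1 := by omega
          rwa [h2] at hY
        calc 2 ^ (d+1) * Nat.factorial (d+1) * g (n+1) (m+1)
            = m * (2 ^ (d+1) * Nat.factorial (d+1) * g n m)
              + (2 * (d+1)) * (2 ^ d * Nat.factorial d * g (n+1) (m+2)) := by
              rw [hrec, pow_succ, Nat.factorial_succ]; ring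
          _ = m * Nat.factorial (n + d + 1) + (2 * (d+1)) * Nat.factorial (n + d + 1) := by
              rw [hX, hY']
          _ = Nat.factorial (n + 1 + (d + 1)) := by
              have h3 : n + 1 + (d + 1) = (n + d + 1) + 1 := by omega
              rw [h3, Nat.factorial_succ]
              have h4 : m + 2 * (d + 1) = n + d + 1 + 1 := by omega
              calc m * Nat.factorial (n+d+1) + 2 * (d+1) * Nat.factorial (n+d+1)
                  = (m + 2 * (d+1)) * Nat.factorial (n+d+1) := by ring
                _ = (n + d + 1 + 1) * Nat.factorial (n+d+1) := by rw [h4]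

/-- The defining predicate: adjacency, last element 1, and `a ≤ k 0 + 1`. -/
def Pc (n a : ℕ) (k : Fin n → ℕ) : Prop :=
  (∀ i j : Fin n, (j : ℕ) = (i : ℕ) + 1 → k i ≤ k j + 1) ∧
  (∀ i : Fin n, (i : ℕ) = n - 1 → k i = 1) ∧
  (∀ i : Fin n, (i : ℕ) = 0 → a ≤ k i + 1)

instance (n a : ℕ) : DecidablePred (Pc n a) := fun k => by unfold Pc; infer_instance

/-- The finite set of valid tuples. -/
def Ac (n a : ℕ) : Finset (Fin n → ℕ) :=
  (Fintype.piFinset fun i : Fin n => Finset.Icc 1 (n - (i : ℕ))).filter (Pc n a)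

lemma mem_Ac {n a : ℕ} {k : Fin n → ℕ} :
    k ∈ Ac n a ↔ (∀ i : Fin n, 1 ≤ k i ∧ k i ≤ n - (i : ℕ)) ∧ Pc n a k := by
  simp [Ac, Fintype.mem_piFinset, Finset.mem_Icc, Finset.mem_filter]

lemma cons_mem_Ac {n a b : ℕ} {t : Fin n → ℕ} :
    Fin.cons b t ∈ Ac (n+1) a ↔ (b ∈ Finset.Icc 1 (n+1) ∧ a ≤ b + 1 ∧ t ∈ Ac n b) := by
  simp only [mem_Ac, Pc, Finset.mem_Icc]
  constructor
  · rintro ⟨hbound, hadj, hlast, hfirst⟩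
    have hb0 := hbound 0
    rw [Fin.cons_zero] at hb0
    refine ⟨⟨hb0.1, by simpa using hb0.2⟩, ?_, ?_, ?_, ?_, ?_⟩
    · have := hfirst 0 rfl
      rwa [Fin.cons_zero] at this
    · intro i
      have := hbound i.succ
      rw [Fin.cons_succ] at this
      refine ⟨this.1, ?_⟩
      have h2 := this.2
      have : (n + 1) - ((i.succ : Fin (n+1)) : ℕ) = n - (i : ℕ) := by
        simp [Fin.val_succ]
      omega
    · intro i j hij
      have := hadj i.succ j.succ (by simp [Fin.val_succ, hij])
      simpa [Fin.cons_succ] using this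
    · intro i hi
      have hlt := i.isLt
      have := hlast i.succ (by simp [Fin.val_succ]; omega)
      simpa [Fin.cons_succ] using this
    · intro i hi
      have := hadj 0 i.succ (by simp [Fin.val_succ, hi])
      simpa [Fin.cons_zero, Fin.cons_succ] using this
  · rintro ⟨⟨hb1, hb2⟩, hab, htb, hadj, hlast, hfirst⟩
    refine ⟨?_, ?_, ?_, ?_⟩
    · intro i
      induction i using Fin.cases with
      | zero => simp only [Fin.cons_zero, Fin.val_zero, Nat.sub_zero]; exact ⟨hb1, hb2⟩
      | succ j =>
        have := htb j
        simp only [Fin.cons_succ, Fin.val_succ]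
        constructor
        · exact this.1
        · have := this.2; omega
    · intro i j hij
      induction i using Fin.cases with
      | zero =>
        induction j using Fin.cases with
        | zero => simp at hij
        | succ j' =>
          simp only [Fin.val_succ, Fin.val_zero] at hij
          rw [Fin.cons_zero, Fin.cons_succ]
          exact hfirst j' (by omega)
      | succ i' =>
        induction j using Fin.cases with
        | zero => simp [Fin.val_succ] at hij
        | succ j' =>
          simp only [Fin.val_succ] at hij
          rw [Fin.cons_succ, Fin.cons_succ]
          exact hadj i' j' (by omega)
    · intro i hi
      induction i using Fin.cases with
      | zero =>
        simp only [Fin.val_zero] at hi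
        rw [Fin.cons_zero]
        omega
      | succ j =>
        simp only [Fin.val_succ] at hi
        rw [Fin.cons_succ]
        have hlt := j.isLt
        exact hlast j (by omega)
    · intro i hi
      induction i using Fin.cases with
      | zero => rw [Fin.cons_zero]; exact hab
      | succ j => simp [Fin.val_succ] at hi

lemma peel (n a : ℕ) :
    (∑ k ∈ Ac (n+1) a, ∏ i, k i)
      = ∑ b ∈ Finset.Icc 1 (n+1),
          if a ≤ b + 1 then b * ∑ t ∈ Ac n b, ∏ i, t i else 0 := by
  classical
  set B : Finset (ℕ × (Fin n → ℕ)) :=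
    (Finset.Icc 1 (n+1) ×ˢ Fintype.piFinset fun i : Fin n => Finset.Icc 1 (n - (i : ℕ))).filter
      (fun p => a ≤ p.1 + 1 ∧ Pc n p.1 p.2) with hB
  have step1 : (∑ k ∈ Ac (n+1) a, ∏ i, k i) = ∑ p ∈ B, p.1 * ∏ i, p.2 i := by
    apply Finset.sum_nbij' (fun k => (k 0, Fin.tail k)) (fun p => Fin.cons p.1 p.2)
    · intro k hk
      have hk' : Fin.cons (k 0) (Fin.tail k) ∈ Ac (n+1) a := by
        rwa [Fin.cons_self_tail]
      rw [cons_mem_Ac] at hk'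
      rw [hB, Finset.mem_filter, Finset.mem_product]
      refine ⟨⟨hk'.1, ?_⟩, hk'.2.1, ?_⟩
      · have := hk'.2.2
        rw [mem_Ac] at this
        rw [Fintype.mem_piFinset]
        intro i
        rw [Finset.mem_Icc]
        exact this.1 i
      · have := hk'.2.2
        rw [mem_Ac] at this
        exact this.2
    · intro p hp
      rw [hB, Finset.mem_filter, Finset.mem_product] at hp
      rw [cons_mem_Ac]
      refine ⟨hp.1.1, hp.2.1, ?_⟩
      rw [mem_Ac]
      refine ⟨?_, hp.2.2⟩
      intro i
      have := hp.1.2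
      rw [Fintype.mem_piFinset] at this
      have := this i
      rwa [Finset.mem_Icc] at this
    · intro k _; exact Fin.cons_self_tail k
    · intro p _; simp
    · intro k _
      rw [Fin.prod_univ_succ]
      rfl
  rw [step1, hB, Finset.sum_filter, Finset.sum_product]
  apply Finset.sum_congr rfl
  intro b _
  by_cases h : a ≤ b + 1
  · rw [if_pos h]
    simp only [h, true_and]
    rw [show (Ac n b) = (Fintype.piFinset fun i : Fin n => Finset.Icc 1 (n - (i : ℕ))).filter (Pc n b) from rfl,
        ← Finset.sum_filter, Finset.mul_sum]
  · rw [if_neg h]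
    simp [h]

lemma key (n : ℕ) : ∀ a, (∑ k ∈ Ac n a, ∏ i, k i) = g n a := by
  induction n with
  | zero =>
    intro a
    have hA : Ac 0 a = {(fun i => i.elim0 : Fin 0 → ℕ)} := by
      apply Finset.eq_singleton_iff_unique_mem.mpr
      constructor
      · rw [mem_Ac]
        exact ⟨fun i => i.elim0, fun i j _ => i.elim0, fun i _ => i.elim0, fun i _ => i.elim0⟩
      · intro x _
        funext i
        exact i.elim0
    rw [hA, Finset.sum_singleton]
    simp [g]
  | succ n ih =>
    intro a
    rw [peel]
    show _ = ∑ b ∈ Finset.Icc 1 (n+1), if a ≤ b + 1 then b * g n b else 0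
    apply Finset.sum_congr rfl
    intro b _
    rw [ih b]

lemma bound_aux (n : ℕ) (k : Fin n → ℕ)
    (hadj : ∀ i j : Fin n, (j : ℕ) = (i : ℕ) + 1 → k i ≤ k j + 1)
    (hlast : ∀ i : Fin n, (i : ℕ) = n - 1 → k i = 1) :
    ∀ d (i : Fin n), (i : ℕ) + d = n - 1 → k i ≤ d + 1 := by
  intro d
  induction d with
  | zero =>
    intro i hi
    rw [hlast i (by omega)]
  | succ d ihd =>
    intro i hi
    have hlt : (i : ℕ) + 1 < n := by have := i.isLt; omega
    have h1 := hadj i ⟨(i : ℕ) + 1, hlt⟩ rfl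
    have h2 := ihd ⟨(i : ℕ) + 1, hlt⟩ (by simp; omega)
    omega

/-- Summing `2^n · n! · ∏ k i` over all tuples `(k 0, …, k (n-1))` of positive
integers (here `k i` stands for `k_{i+1}`) satisfying condition (1), i.e.
`k_{i+1} ≥ k_i − 1` for `1 ≤ i < n` and `k_n = 1`, gives `(2n)!`; equivalently
the probabilities `2^n n! (∏ k i) / (2n)!` sum to one. -/
theorem stmt_13 (n : ℕ) (hn : 1 ≤ n) :
    ∑ᶠ k ∈ {k : Fin n → ℕ | (∀ i, 0 < k i) ∧
        (∀ i j : Fin n, (j : ℕ) = (i : ℕ) + 1 → k i ≤ k j + 1) ∧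
        (∀ i : Fin n, (i : ℕ) = n - 1 → k i = 1)},
      2 ^ n * Nat.factorial n * ∏ i, k i = Nat.factorial (2 * n) := by
  have hset : {k : Fin n → ℕ | (∀ i, 0 < k i) ∧
      (∀ i j : Fin n, (j : ℕ) = (i : ℕ) + 1 → k i ≤ k j + 1) ∧
      (∀ i : Fin n, (i : ℕ) = n - 1 → k i = 1)} = ↑(Ac n 1) := by
    ext k
    simp only [Set.mem_setOf_eq, Finset.mem_coe, mem_Ac, Pc]
    constructor
    · rintro ⟨hpos, hadj, hlast⟩
      refine ⟨fun i => ⟨hpos i, ?_⟩, hadj, hlast, fun i _ => by omega⟩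
      have hlt := i.isLt
      have := bound_aux n k hadj hlast (n - 1 - (i : ℕ)) i (by omega)
      omega
    · rintro ⟨hb, hadj, hlast, _⟩
      exact ⟨fun i => (hb i).1, hadj, hlast⟩
  rw [hset, finsum_mem_coe_finset, ← Finset.mul_sum, key n 1]
  have := g_formula n hn n 0 (by omega)
  simpa [two_mul] using this
end
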